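/- arXiv:math/0002033 — 6 statements merged into one kernel-verified Lean document; each statement's English description precedes it below -/
import Mathlib

section
/- Let θ(z) be a function holomorphic on a neighborhood of 0 in ℂ^N with values in bounded operators from a Hilbert space U to a Hilbert space Y, and suppose θ has a zero of multiplicity m > 0 at z = 0 (i.e., the first m−1 homogeneous terms of its Taylor expansion vanish and the m-th does not). Then there exist separable Hilbert spaces Y⁽⁰⁾ = Y, Y⁽¹⁾, …, Y⁽ᵐ⁾, bounded operators L_k^{(j)} : Y⁽ʲ⁾ → Y⁽ʲ⁻¹⁾ for j = 1,…,m and k = 1,…,N, and a function φ holomorphic on a (possibly smaller) neighborhood of 0 with values in bounded operators from U to Y⁽ᵐ⁾ with φ(0) ≠ 0, such that θ(z) = (zL⁽¹⁾)⋯(zL⁽ᵐ⁾)φ(z) on that neighborhood, where zL⁽ʲ⁾ := Σ_{k=1}^N z_k L_k^{(j)}. -/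
noncomputable section

open scoped ComplexConjugate

/-- A bundled separable complex Hilbert space. -/
structure HilbertSp : Type 1 where
  carrier : Type
  [iN : NormedAddCommGroup carrier]
  [iI : InnerProductSpace ℂ carrier]
  [iC : CompleteSpace carrier]
  [iS : TopologicalSpace.SeparableSpace carrier]

attribute [instance] HilbertSp.iN HilbertSp.iI HilbertSp.iC HilbertSp.iS

variable {N : ℕ}

/-- The linear pencil `z ↦ Σₖ z_k T_k` associated with an `N`-tuple of operators. -/
def pencil {E F : Type*} [NormedAddCommGroup E] [NormedAddCommGroup F]
    [NormedSpace ℂ E] [NormedSpace ℂ F]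
    (T : Fin N → (E →L[ℂ] F)) (z : Fin N → ℂ) : E →L[ℂ] F := ∑ k, z k • T k

/-- membership in the unit torus `𝕋^N` -/
def onTorus (ζ : Fin N → ℂ) : Prop := ∀ k, ‖ζ k‖ = 1

/-- membership in the open unit polydisk `𝔻^N` -/
def inPolydisk (z : Fin N → ℂ) : Prop := ∀ k, ‖z k‖ < 1

/-- `θ` has a zero of multiplicity `m` at `z = 0`: it is holomorphic near `0` and the
homogeneous terms of its Taylor expansion of degree `< m` vanish while that of degree `m`
does not. -/
def HasZeroOfOrder {U Y : Type*} [NormedAddCommGroup U] [NormedAddCommGroup Y]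
    [NormedSpace ℂ U] [NormedSpace ℂ Y]
    (θ : (Fin N → ℂ) → (U →L[ℂ] Y)) (m : ℕ) : Prop :=
  ∃ p : FormalMultilinearSeries ℂ (Fin N → ℂ) (U →L[ℂ] Y),
    HasFPowerSeriesAt θ p 0 ∧ (∀ j, j < m → ∀ z : Fin N → ℂ, (p j) (fun _ => z) = 0) ∧
      (∃ z : Fin N → ℂ, (p m) (fun _ => z) ≠ 0)

/-- The product `(zL⁽¹⁾)(zL⁽²⁾)⋯(zL⁽ᵐ⁾) : Ysp m → Ysp 0` of linear pencils along a chain of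
spaces, where `L j k : Ysp (j+1) → Ysp j` plays the role of `L_k^{(j+1)}`. -/
def chainMul {Ysp : ℕ → Type*} [∀ j, NormedAddCommGroup (Ysp j)] [∀ j, NormedSpace ℂ (Ysp j)]
    (L : (j : ℕ) → Fin N → (Ysp (j + 1) →L[ℂ] Ysp j)) (z : Fin N → ℂ) :
    (m : ℕ) → (Ysp m →L[ℂ] Ysp 0)
  | 0 => ContinuousLinearMap.id ℂ (Ysp 0)
  | (m + 1) => (chainMul L z m).comp (pencil (L m) z)

/-- The product `(zR⁽ᵐ⁾)⋯(zR⁽¹⁾) : Usp 0 → Usp m` of linear pencils along a chain of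
spaces, where `R j k : Usp j → Usp (j+1)` plays the role of `R_k^{(j+1)}`. -/
def chainMulR {Usp : ℕ → Type*} [∀ j, NormedAddCommGroup (Usp j)] [∀ j, NormedSpace ℂ (Usp j)]
    (R : (j : ℕ) → Fin N → (Usp j →L[ℂ] Usp (j + 1))) (z : Fin N → ℂ) :
    (m : ℕ) → (Usp 0 →L[ℂ] Usp m)
  | 0 => ContinuousLinearMap.id ℂ (Usp 0)
  | (m + 1) => (pencil (R m) z).comp (chainMulR R z m)

/-- the Hilbert space direct sum `E ⊕ F` -/
abbrev hS (E F : Type*) := WithLp 2 (E × F)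

section blocks

variable (E F : Type*) [NormedAddCommGroup E] [NormedAddCommGroup F]
  [NormedSpace ℂ E] [NormedSpace ℂ F]

/-- inclusion of the first summand -/
def inlL : E →L[ℂ] hS E F :=
  ((WithLp.prodContinuousLinearEquiv 2 ℂ E F).symm : E × F →L[ℂ] hS E F).comp
    (ContinuousLinearMap.inl ℂ E F)

/-- inclusion of the second summand -/
def inrL : F →L[ℂ] hS E F :=
  ((WithLp.prodContinuousLinearEquiv 2 ℂ E F).symm : E × F →L[ℂ] hS E F).comp
    (ContinuousLinearMap.inr ℂ E F)

/-- projection onto the first summand -/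
def fstL : hS E F →L[ℂ] E :=
  (ContinuousLinearMap.fst ℂ E F).comp
    (WithLp.prodContinuousLinearEquiv 2 ℂ E F : hS E F →L[ℂ] E × F)

/-- projection onto the second summand -/
def sndL : hS E F →L[ℂ] F :=
  (ContinuousLinearMap.snd ℂ E F).comp
    (WithLp.prodContinuousLinearEquiv 2 ℂ E F : hS E F →L[ℂ] E × F)

end blocks

/-- the block operator `[[A,B],[C,D]] : X ⊕ U → X' ⊕ Y'` -/
def block2 {X U X' Y' : Type*} [NormedAddCommGroup X] [NormedAddCommGroup U]
    [NormedAddCommGroup X'] [NormedAddCommGroup Y']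
    [NormedSpace ℂ X] [NormedSpace ℂ U] [NormedSpace ℂ X'] [NormedSpace ℂ Y']
    (A : X →L[ℂ] X') (B : U →L[ℂ] X') (C : X →L[ℂ] Y') (D : U →L[ℂ] Y') :
    hS X U →L[ℂ] hS X' Y' :=
  (inlL X' Y').comp (A.comp (fstL X U)) + (inlL X' Y').comp (B.comp (sndL X U)) +
    (inrL X' Y').comp (C.comp (fstL X U)) + (inrL X' Y').comp (D.comp (sndL X U))

/-- the transfer function `θ_α(z) = zD + zC (1 - zA)⁻¹ zB` of the system
`α = (N; A, B, C, D; X, U, Y)` -/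
def transfer {X U Y : Type*} [NormedAddCommGroup X] [NormedAddCommGroup U] [NormedAddCommGroup Y]
    [NormedSpace ℂ X] [NormedSpace ℂ U] [NormedSpace ℂ Y]
    (A : Fin N → (X →L[ℂ] X)) (B : Fin N → (U →L[ℂ] X)) (C : Fin N → (X →L[ℂ] Y))
    (D : Fin N → (U →L[ℂ] Y)) (z : Fin N → ℂ) : U →L[ℂ] Y :=
  pencil D z + (pencil C z).comp ((Ring.inverse (1 - pencil A z)).comp (pencil B z))

/-- unitarity of a bounded operator between Hilbert spaces -/
def IsUnitaryOp {E F : Type*} [NormedAddCommGroup E] [InnerProductSpace ℂ E] [CompleteSpace E]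
    [NormedAddCommGroup F] [InnerProductSpace ℂ F] [CompleteSpace F] (W : E →L[ℂ] F) : Prop :=
  (ContinuousLinearMap.adjoint W).comp W = 1 ∧ W.comp (ContinuousLinearMap.adjoint W) = 1

/-- the block operator `G_α` of a system, as an `N`-tuple -/
def sysBlock {X U Y : Type*} [NormedAddCommGroup X] [NormedAddCommGroup U] [NormedAddCommGroup Y]
    [NormedSpace ℂ X] [NormedSpace ℂ U] [NormedSpace ℂ Y]
    (A : Fin N → (X →L[ℂ] X)) (B : Fin N → (U →L[ℂ] X)) (C : Fin N → (X →L[ℂ] Y))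
    (D : Fin N → (U →L[ℂ] Y)) : Fin N → (hS X U →L[ℂ] hS X Y) :=
  fun k => block2 (A k) (B k) (C k) (D k)

/-- `α` is a conservative scattering system: `ζ G_α` is unitary for every `ζ ∈ 𝕋^N`. -/
def Conservative {X U Y : Type*} [NormedAddCommGroup X] [InnerProductSpace ℂ X] [CompleteSpace X]
    [NormedAddCommGroup U] [InnerProductSpace ℂ U] [CompleteSpace U]
    [NormedAddCommGroup Y] [InnerProductSpace ℂ Y] [CompleteSpace Y]
    (A : Fin N → (X →L[ℂ] X)) (B : Fin N → (U →L[ℂ] X)) (C : Fin N → (X →L[ℂ] Y))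
    (D : Fin N → (U →L[ℂ] Y)) : Prop :=
  ∀ ζ : Fin N → ℂ, onTorus ζ → IsUnitaryOp (pencil (sysBlock A B C D) ζ)

/-! Since the Taylor series of `θ` starts in degree `m`, each of its terms
`p_{m+n}(z, …, z)` can be expanded by multilinearity in its first `m` arguments along the
standard basis `e_1, …, e_N`: `θ(z) = Σ_w z^w ψ_w(z)`, where `w` runs over the words of
length `m` over `{1, …, N}`, `z^w = z_{w_1} ⋯ z_{w_m}`, and `ψ_w` is the holomorphic function
with Taylor coefficients `p_{m+n}(e_{w_1}, …, e_{w_m}, ·)`. Take `Y⁽ʲ⁾ = ℓ²(words of length j; Y)`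
and let `L_k` restrict to the words starting with `k`; then `(zL⁽¹⁾)⋯(zL⁽ᵐ⁾)` maps `(y_w)_w`
to `Σ_w z^w y_w`, so `φ = (ψ_w)_w` is a factor. It does not vanish at `0` because
`Σ_w z^w ψ_w(0) = p_m(z, …, z)`. -/

open Topology

namespace MultilinearMap

variable {R ι κ M G : Type*} [CommSemiring R] [AddCommMonoid M] [Module R M] [AddCommMonoid G]
  [Module R G] [Fintype ι] [Fintype κ] [DecidableEq κ]

theorem apply_const_eq_sum_basis (f : MultilinearMap R (fun _ : κ => M) G)
    (b : Module.Basis ι R M) (x : M) :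
    f (fun _ => x) = ∑ w : κ → ι, (∏ i, b.repr x (w i)) • f (fun i => b (w i)) := by
  conv_lhs => rw [← b.sum_repr x]
  rw [f.map_sum]
  simp_rw [f.map_smul_univ]

end MultilinearMap

namespace FormalMultilinearSeries

variable {𝕜 E F : Type*} [NontriviallyNormedField 𝕜] [NormedAddCommGroup E] [NormedSpace 𝕜 E]
  [NormedAddCommGroup F] [NormedSpace 𝕜 F] (p : FormalMultilinearSeries 𝕜 E F)

def curryAppend (m n : ℕ) : E [×m]→L[𝕜] E [×n]→L[𝕜] F :=
  ((p (m + n)).domDomCongr finSumFinEquiv.symm).currySum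

theorem curryAppend_apply {m n : ℕ} (a : Fin m → E) (v : Fin n → E) :
    p.curryAppend m n a v = p (m + n) (Fin.append a v) := by
  simp only [curryAppend, ContinuousMultilinearMap.currySum_apply,
    ContinuousMultilinearMap.domDomCongr_apply]
  congr 1
  funext i
  refine Fin.addCases (fun i => ?_) (fun i => ?_) i <;> simp

def fixLeft {m : ℕ} (a : Fin m → E) : FormalMultilinearSeries 𝕜 E F :=
  fun n => p.curryAppend m n a

theorem norm_fixLeft_le {m : ℕ} (a : Fin m → E) (n : ℕ) :
    ‖p.fixLeft a n‖ ≤ ‖p (m + n)‖ * ∏ i, ‖a i‖ := by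
  have hsplit : ‖p.curryAppend m n‖ = ‖p (m + n)‖ :=
    ((ContinuousMultilinearMap.currySumEquiv 𝕜 (Fin m) (Fin n) E F).norm_map _).trans
      (ContinuousMultilinearMap.norm_domDomCongr 𝕜 E F _ _)
  exact hsplit ▸ (p.curryAppend m n).le_opNorm a

theorem radius_le_radius_fixLeft {m : ℕ} (a : Fin m → E) : p.radius ≤ (p.fixLeft a).radius := by
  refine ENNReal.le_of_forall_pos_nnreal_lt fun r hr0 hr => ?_
  obtain ⟨C, -, hC⟩ := p.norm_mul_pow_le_of_lt_radius hr
  have hr0' : (0 : ℝ) < r := hr0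
  refine le_radius_of_bound _ (C * (∏ i, ‖a i‖) / (r : ℝ) ^ m) fun n => ?_
  rw [le_div_iff₀ (by positivity)]
  calc ‖p.fixLeft a n‖ * (r : ℝ) ^ n * (r : ℝ) ^ m
      ≤ ‖p (m + n)‖ * (∏ i, ‖a i‖) * (r : ℝ) ^ n * (r : ℝ) ^ m := by
        gcongr; exact p.norm_fixLeft_le a n
    _ = ‖p (m + n)‖ * (r : ℝ) ^ (m + n) * ∏ i, ‖a i‖ := by ring
    _ ≤ C * ∏ i, ‖a i‖ := by gcongr; exact hC _

theorem sum_basis_fixLeft_apply {ι : Type*} [Fintype ι] (b : Module.Basis ι 𝕜 E) (m n : ℕ)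
    (x : E) :
    ∑ w : Fin m → ι, (∏ i, b.repr x (w i)) • p.fixLeft (b ∘ w) n (fun _ => x) =
      p (m + n) (fun _ => x) := by
  have hx : p (m + n) (fun _ => x) = p.curryAppend m n (fun _ => x) (fun _ => x) := by
    rw [curryAppend_apply]
    congr 1
    funext i
    refine Fin.addCases (fun i => ?_) (fun i => ?_) i <;> simp
  have hexp := congrArg (fun T => T fun _ : Fin n => x)
    ((p.curryAppend m n).toMultilinearMap.apply_const_eq_sum_basis b x)
  simp only [ContinuousMultilinearMap.coe_coe, _root_.sum_apply,
    _root_.smul_apply] at hexp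
  rw [hx, hexp]
  rfl

theorem sum_zero_eq_apply_zero (q : FormalMultilinearSeries 𝕜 E F) :
    q.sum 0 = q 0 (fun _ => 0) := by
  refine tsum_eq_single 0 fun n hn => ?_
  obtain ⟨k, rfl⟩ := Nat.exists_eq_succ_of_ne_zero hn
  exact (q (k + 1)).map_coord_zero 0 rfl

theorem exists_fixLeft_sum_zero_ne {ι : Type*} [Fintype ι] (b : Module.Basis ι 𝕜 E) {m : ℕ}
    (h : ∃ x, p m (fun _ => x) ≠ 0) : ∃ w : Fin m → ι, (p.fixLeft (b ∘ w)).sum 0 ≠ 0 := by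
  obtain ⟨x, hx⟩ := h
  by_contra! hzero
  refine hx ?_
  refine (p.sum_basis_fixLeft_apply b m 0 x).symm.trans <| Finset.sum_eq_zero fun w _ => ?_
  rw [Subsingleton.elim (fun _ => x) (fun _ => 0), ← sum_zero_eq_apply_zero, hzero w, smul_zero]

end FormalMultilinearSeries

theorem HasFPowerSeriesAt.eventually_eq_sum_basis_fixLeft {𝕜 E F ι : Type*}
    [NontriviallyNormedField 𝕜] [NormedAddCommGroup E] [NormedSpace 𝕜 E]
    [NormedAddCommGroup F] [NormedSpace 𝕜 F] [CompleteSpace F] [Fintype ι]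
    {f : E → F} {p : FormalMultilinearSeries 𝕜 E F} (hf : HasFPowerSeriesAt f p 0)
    (b : Module.Basis ι 𝕜 E) {m : ℕ} (hp : ∀ j < m, ∀ x, p j (fun _ => x) = 0) :
    ∀ᶠ x in 𝓝 0, f x = ∑ w : Fin m → ι, (∏ i, b.repr x (w i)) • (p.fixLeft (b ∘ w)).sum x := by
  obtain ⟨r, hr⟩ := hf
  filter_upwards [Metric.eball_mem_nhds 0 hr.r_pos] with x hx
  have htail : HasSum (fun n => p (m + n) (fun _ => x)) (f x) := by
    have h := hr.hasSum hx
    rw [zero_add, ← hasSum_nat_add_iff' m,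
      Finset.sum_eq_zero fun j hj => hp j (Finset.mem_range.1 hj) x, sub_zero] at h
    convert h using 3 with n
    rw [Nat.add_comm]
  have hfix (w : Fin m → ι) :
      HasSum (fun n => p.fixLeft (b ∘ w) n (fun _ => x)) ((p.fixLeft (b ∘ w)).sum x) :=
    (p.fixLeft _).hasSum
      (Metric.eball_subset_eball (hr.r_le.trans (p.radius_le_radius_fixLeft _)) hx)
  have hsum := hasSum_sum (s := Finset.univ) fun w _ => (hfix w).const_smul (∏ i, b.repr x (w i))
  simp only [p.sum_basis_fixLeft_apply] at hsum
  exact htail.unique hsum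

section WordSpace

variable (N) (Y : Type) [NormedAddCommGroup Y] [NormedSpace ℂ Y]

abbrev WordSpace (j : ℕ) : Type := PiLp 2 fun _ : Fin j → Fin N => Y

def wordShift (j : ℕ) (k : Fin N) : WordSpace N Y (j + 1) →L[ℂ] WordSpace N Y j :=
  (PiLp.continuousLinearEquiv 2 ℂ _).symm.toContinuousLinearMap ∘L
    ContinuousLinearMap.pi fun w => PiLp.proj 2 _ (Fin.cons k w)

def wordSingle {j : ℕ} (w : Fin j → Fin N) : Y →L[ℂ] WordSpace N Y j :=
  (PiLp.continuousLinearEquiv 2 ℂ _).symm.toContinuousLinearMap ∘L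
    ContinuousLinearMap.single ℂ (fun _ : Fin j → Fin N => Y) w

def wordSpaceZeroEquiv : WordSpace N Y 0 ≃ₗᵢ[ℂ] Y where
  toLinearEquiv := (PiLp.equivOfUnique 2 ℂ _).toLinearEquiv
  norm_map' x := by
    rw [PiLp.norm_eq_of_L2, Fintype.sum_unique, Real.sqrt_sq (norm_nonneg _)]
    rfl

variable {N Y}

theorem wordShift_apply {j : ℕ} (k : Fin N) (y : WordSpace N Y (j + 1)) (w : Fin j → Fin N) :
    wordShift N Y j k y w = y (Fin.cons k w) := rfl

theorem sum_wordSingle_comp_apply {U : Type*} [NormedAddCommGroup U] [NormedSpace ℂ U] {j : ℕ}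
    (T : (Fin j → Fin N) → U →L[ℂ] Y) (u : U) (w : Fin j → Fin N) :
    (∑ v, wordSingle N Y v ∘L T v) u w = T w u := by
  simp [wordSingle, Pi.single_apply]

theorem pencil_wordShift_apply (z : Fin N → ℂ) {j : ℕ} (y : WordSpace N Y (j + 1))
    (w : Fin j → Fin N) : pencil (wordShift N Y j) z y w = ∑ k, z k • y (Fin.cons k w) := by
  simp [pencil, wordShift_apply]

theorem chainMul_wordShift_apply (z : Fin N → ℂ) : ∀ (j : ℕ) (y : WordSpace N Y j),
    chainMul (wordShift N Y) z j y default = ∑ w : Fin j → Fin N, (∏ i, z (w i)) • y w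
  | 0, y => by simp [chainMul]
  | j + 1, y => by
    rw [← (Fin.consEquiv fun _ => Fin N).sum_comp, Fintype.sum_prod_type, Finset.sum_comm]
    simp only [chainMul, ContinuousLinearMap.comp_apply, chainMul_wordShift_apply z j,
      pencil_wordShift_apply, Finset.smul_sum, Fin.consEquiv_apply, Fin.prod_univ_succ,
      Fin.cons_zero, Fin.cons_succ, smul_smul, mul_comm]
    rfl

end WordSpace

theorem left_linear_factor_extraction_general {N m : ℕ} {U Y : Type}
    [NormedAddCommGroup U] [InnerProductSpace ℂ U]
    [NormedAddCommGroup Y] [InnerProductSpace ℂ Y] [CompleteSpace Y]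
    [TopologicalSpace.SeparableSpace Y]
    (θ : (Fin N → ℂ) → (U →L[ℂ] Y)) (hθ : HasZeroOfOrder θ m) :
    ∃ (Ysp : ℕ → HilbertSp) (e : (Ysp 0).carrier ≃ₗᵢ[ℂ] Y)
      (L : (j : ℕ) → Fin N → ((Ysp (j + 1)).carrier →L[ℂ] (Ysp j).carrier))
      (φ : (Fin N → ℂ) → (U →L[ℂ] (Ysp m).carrier)),
      AnalyticAt ℂ φ 0 ∧ φ 0 ≠ 0 ∧
        ∀ᶠ z in nhds 0, θ z =
          (e.toLinearIsometry.toContinuousLinearMap.comp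
            (chainMul (Ysp := fun j => (Ysp j).carrier) L z m)).comp (φ z) := by
  obtain ⟨p, hp, hvan, hne⟩ := hθ
  let b := Pi.basisFun ℂ (Fin N)
  let ψ : (Fin m → Fin N) → (Fin N → ℂ) → (U →L[ℂ] Y) := fun w => (p.fixLeft (b ∘ w)).sum
  have hψ : ∀ w, AnalyticAt ℂ (ψ w) 0 := fun w =>
    ((p.fixLeft (b ∘ w)).hasFPowerSeriesOnBall
      (hp.radius_pos.trans_le (p.radius_le_radius_fixLeft _))).analyticAt
  let φ : (Fin N → ℂ) → U →L[ℂ] WordSpace N Y m := fun z => ∑ w, wordSingle N Y w ∘L ψ w z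
  have hφ : ∀ z u w, φ z u w = ψ w z u := fun z => sum_wordSingle_comp_apply _
  refine ⟨fun j => { carrier := WordSpace N Y j }, wordSpaceZeroEquiv N Y, wordShift N Y, φ,
    ?_, ?_, ?_⟩
  · exact Finset.analyticAt_fun_sum _ fun w _ =>
      ((ContinuousLinearMap.compL ℂ U Y _ (wordSingle N Y w)).analyticAt _).comp (hψ w)
  · obtain ⟨w, hw⟩ := p.exists_fixLeft_sum_zero_ne b hne
    intro h
    exact hw (ContinuousLinearMap.ext fun u => by simpa [hφ] using congrArg (fun T => T u w) h)
  · filter_upwards [hp.eventually_eq_sum_basis_fixLeft b hvan] with z hz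
    refine ContinuousLinearMap.ext fun u => ?_
    show θ z u = chainMul (wordShift N Y) z m (φ z u) default
    simp [hz, chainMul_wordShift_apply, hφ, b, ψ]

/-- Theorem `thm:left`: a holomorphic operator-valued function with a zero of
multiplicity `m > 0` at the origin factors as a product of `m` linear homogeneous factors
along a chain of separable Hilbert spaces, times a holomorphic function not vanishing at `0`. -/
theorem left_linear_factor_extraction {N m : ℕ} {U Y : Type}
    [NormedAddCommGroup U] [InnerProductSpace ℂ U] [CompleteSpace U]
    [TopologicalSpace.SeparableSpace U]
    [NormedAddCommGroup Y] [InnerProductSpace ℂ Y] [CompleteSpace Y]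
    [TopologicalSpace.SeparableSpace Y]
    (θ : (Fin N → ℂ) → (U →L[ℂ] Y)) (hm : 0 < m) (hθ : HasZeroOfOrder θ m) :
    ∃ (Ysp : ℕ → HilbertSp) (e : (Ysp 0).carrier ≃ₗᵢ[ℂ] Y)
      (L : (j : ℕ) → Fin N → ((Ysp (j + 1)).carrier →L[ℂ] (Ysp j).carrier))
      (φ : (Fin N → ℂ) → (U →L[ℂ] (Ysp m).carrier)),
      AnalyticAt ℂ φ 0 ∧ φ 0 ≠ 0 ∧
        ∀ᶠ z in nhds 0, θ z =
          (e.toLinearIsometry.toContinuousLinearMap.comp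
            (chainMul (Ysp := fun j => (Ysp j).carrier) L z m)).comp (φ z) :=
  left_linear_factor_extraction_general θ hθ
end
end

section
/- Let θ(z) = zD + zC(I_X − zA)^{-1} zB be the transfer function of an N-parametric linear system with state space X, input space U, output space Y, defined on a neighborhood of 0 where I_X − zA is invertible. If θ has a zero of multiplicity m > 1 at z = 0, then D_k = 0 for all k and θ(z) = zC (zA)^{m−2} (I_X − zA)^{-1} zB on that neighborhood; moreover zC (zA)^j zB = 0 identically for all 0 ≤ j < m − 2. -/
noncomputable section

open scoped ComplexConjugate

variable {N : ℕ}

/-! On the complex line `t ↦ t • z`, the Taylor series of `θ` and the Neumann expansion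
`θ (t • z) = t • zD + ∑ⱼ t ^ (j + 2) • zC (zA)ʲ zB` are both power series in `t`, so by
uniqueness of coefficients the homogeneous term of degree `n` of `θ` at `z` is `zD` for `n = 1`
and `zC (zA)ⁿ⁻² zB` for `n ≥ 2`. A zero of order `m` kills these terms for `n < m`, and then the
first `m - 2` terms of `(I - zA)⁻¹ = ∑_{j < m-2} (zA)ʲ + (zA)ᵐ⁻² (I - zA)⁻¹` contribute nothing
to `θ`. -/

open Filter Topology

theorem Ring.inverse_one_sub_eq_geom_sum_add {R : Type*} [Ring R] {x : R} (hx : IsUnit (1 - x))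
    (n : ℕ) :
    Ring.inverse (1 - x) = ∑ i ∈ Finset.range n, x ^ i + x ^ n * Ring.inverse (1 - x) := by
  have hsum : ∑ i ∈ Finset.range n, x ^ i = (1 - x ^ n) * Ring.inverse (1 - x) := by
    rw [← geom_sum_mul_neg, mul_assoc, Ring.mul_inverse_cancel _ hx, mul_one]
  rw [hsum, ← add_mul, sub_add_cancel, one_mul]

theorem ContinuousLinearMap.comp_inverse_one_sub_comp_eq_of_forall_lt
    {𝕜 X U Y : Type*} [NontriviallyNormedField 𝕜]
    [NormedAddCommGroup X] [NormedAddCommGroup U] [NormedAddCommGroup Y]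
    [NormedSpace 𝕜 X] [NormedSpace 𝕜 U] [NormedSpace 𝕜 Y]
    {L : X →L[𝕜] Y} {T : X →L[𝕜] X} {R : U →L[𝕜] X} (hT : IsUnit (1 - T)) {n : ℕ}
    (h : ∀ i < n, L.comp ((T ^ i).comp R) = 0) :
    L.comp ((Ring.inverse (1 - T)).comp R) =
      L.comp (((T ^ n).comp (Ring.inverse (1 - T))).comp R) := by
  have hhead : L.comp ((∑ i ∈ Finset.range n, T ^ i).comp R) = 0 := by
    rw [ContinuousLinearMap.finsetSum_comp, ContinuousLinearMap.comp_finsetSum]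
    exact Finset.sum_eq_zero fun i hi => h i (Finset.mem_range.mp hi)
  conv_lhs => rw [Ring.inverse_one_sub_eq_geom_sum_add hT n]
  rw [ContinuousLinearMap.add_comp, ContinuousLinearMap.comp_add, hhead, zero_add,
    ContinuousLinearMap.mul_def]

theorem eq_of_eventually_hasSum_pow_smul {𝕜 E : Type*} [NontriviallyNormedField 𝕜]
    [NormedAddCommGroup E] [NormedSpace 𝕜 E] {f : 𝕜 → E} {a b : ℕ → E}
    (ha : ∀ᶠ t in 𝓝 0, HasSum (fun n => t ^ n • a n) (f t))
    (hb : ∀ᶠ t in 𝓝 0, HasSum (fun n => t ^ n • b n) (f t)) : a = b := by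
  have hseries : ∀ c : ℕ → E, (∀ᶠ t in 𝓝 0, HasSum (fun n => t ^ n • c n) (f t)) →
      HasFPowerSeriesAt f (fun n => ContinuousMultilinearMap.mkPiRing 𝕜 (Fin n) (c n)) 0 :=
    fun c hc => hasFPowerSeriesAt_iff.2 <| by
      simpa [FormalMultilinearSeries.coeff] using hc
  funext n
  simpa [FormalMultilinearSeries.coeff] using
    congrArg (fun p : FormalMultilinearSeries 𝕜 𝕜 E => p.coeff n)
      ((hseries a ha).eq_formalMultilinearSeries (hseries b hb))

theorem HasFPowerSeriesAt.eventually_hasSum_pow_smul {𝕜 E F : Type*} [NontriviallyNormedField 𝕜]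
    [NormedAddCommGroup E] [NormedSpace 𝕜 E] [NormedAddCommGroup F] [NormedSpace 𝕜 F]
    {f : E → F} {p : FormalMultilinearSeries 𝕜 E F} {x : E} (hf : HasFPowerSeriesAt f p x)
    (z : E) : ∀ᶠ t in 𝓝 (0 : 𝕜), HasSum (fun n => t ^ n • p n (fun _ => z)) (f (x + t • z)) := by
  have hline : Tendsto (fun t : 𝕜 => t • z) (𝓝 0) (𝓝 0) :=
    (continuous_id.smul continuous_const).tendsto' 0 0 (zero_smul 𝕜 z)
  filter_upwards [hline.eventually hf.eventually_hasSum] with t ht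
  simpa [ContinuousMultilinearMap.map_smul_univ (p _) (fun _ => t) (fun _ => z)] using ht

section Transfer

variable {X U Y : Type*} [NormedAddCommGroup X] [NormedAddCommGroup U] [NormedAddCommGroup Y]
  [NormedSpace ℂ X] [NormedSpace ℂ U] [NormedSpace ℂ Y]

theorem pencil_smul (T : Fin N → (U →L[ℂ] Y)) (t : ℂ) (z : Fin N → ℂ) :
    pencil T (t • z) = t • pencil T z := by
  simp only [pencil, Pi.smul_apply, smul_eq_mul, Finset.smul_sum, smul_smul]

theorem pencil_single (T : Fin N → (U →L[ℂ] Y)) (k : Fin N) :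
    pencil T (Pi.single k 1) = T k := by
  simp [pencil, Pi.single_apply]

def transferCoeff (A : Fin N → (X →L[ℂ] X)) (B : Fin N → (U →L[ℂ] X))
    (C : Fin N → (X →L[ℂ] Y)) (D : Fin N → (U →L[ℂ] Y)) (z : Fin N → ℂ) : ℕ → (U →L[ℂ] Y)
  | 0 => 0
  | 1 => pencil D z
  | j + 2 => (pencil C z).comp (((pencil A z) ^ j).comp (pencil B z))

theorem eventually_hasSum_transferCoeff [CompleteSpace X] (A : Fin N → (X →L[ℂ] X))
    (B : Fin N → (U →L[ℂ] X)) (C : Fin N → (X →L[ℂ] Y)) (D : Fin N → (U →L[ℂ] Y))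
    (z : Fin N → ℂ) :
    ∀ᶠ t in 𝓝 (0 : ℂ),
      HasSum (fun n => t ^ n • transferCoeff A B C D z n) (transfer A B C D (t • z)) := by
  set T := pencil A z
  set L := pencil C z
  set R := pencil B z
  have hsmall : ∀ᶠ t in 𝓝 (0 : ℂ), ‖t • T‖ < 1 :=
    ((continuous_id.smul continuous_const).norm.tendsto' 0 0 (by simp)).eventually_lt_const
      zero_lt_one
  filter_upwards [hsmall] with t ht
  let Φ : (X →L[ℂ] X) →L[ℂ] (U →L[ℂ] Y) :=
    (ContinuousLinearMap.compL ℂ U X Y L).comp ((ContinuousLinearMap.compL ℂ U X X).flip R)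
  have hΦ : ∀ S, Φ S = L.comp (S.comp R) := fun _ => rfl
  have hval :
      transfer A B C D (t • z) = t • pencil D z + t ^ 2 • Φ (Ring.inverse (1 - t • T)) := by
    simp only [transfer, pencil_smul, hΦ, ContinuousLinearMap.smul_comp,
      ContinuousLinearMap.comp_smul, smul_smul, sq, T, L, R]
  have hcoeff : (fun j => t ^ (j + 2) • transferCoeff A B C D z (j + 2)) =
      fun j => t ^ 2 • Φ ((t • T) ^ j) := by
    funext j
    rw [hΦ, smul_pow, ContinuousLinearMap.smul_comp, ContinuousLinearMap.comp_smul, smul_smul,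
      ← pow_add, add_comm 2 j]
    rfl
  refine (hasSum_nat_add_iff' 2).mp ?_
  rw [hcoeff, hval, Finset.sum_range_succ, Finset.sum_range_one]
  simpa only [transferCoeff, pow_zero, pow_one, smul_zero, zero_add, add_sub_cancel_left] using
    (Φ.hasSum (hasSum_geom_series_inverse _ ht)).const_smul (t ^ 2)

theorem transferCoeff_eq_of_hasFPowerSeriesAt [CompleteSpace X] {A : Fin N → (X →L[ℂ] X)}
    {B : Fin N → (U →L[ℂ] X)} {C : Fin N → (X →L[ℂ] Y)} {D : Fin N → (U →L[ℂ] Y)}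
    {θ : (Fin N → ℂ) → (U →L[ℂ] Y)} {p : FormalMultilinearSeries ℂ (Fin N → ℂ) (U →L[ℂ] Y)}
    (hθ : θ =ᶠ[𝓝 0] transfer A B C D) (hp : HasFPowerSeriesAt θ p 0) (z : Fin N → ℂ) :
    transferCoeff A B C D z = fun n => p n (fun _ => z) := by
  have hline : Tendsto (fun t : ℂ => t • z) (𝓝 0) (𝓝 0) :=
    (continuous_id.smul continuous_const).tendsto' 0 0 (zero_smul ℂ z)
  refine eq_of_eventually_hasSum_pow_smul (f := fun t : ℂ => θ (t • z)) ?_ ?_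
  · filter_upwards [eventually_hasSum_transferCoeff A B C D z, hline.eventually hθ]
      with t hsum hθt
    rwa [hθt]
  · simpa only [zero_add] using hp.eventually_hasSum_pow_smul z

end Transfer

theorem transfer_function_multiple_zero_general {N m : ℕ} {X U Y : Type}
    [NormedAddCommGroup X] [InnerProductSpace ℂ X] [CompleteSpace X]
    [NormedAddCommGroup U] [InnerProductSpace ℂ U]
    [NormedAddCommGroup Y] [InnerProductSpace ℂ Y]
    (A : Fin N → (X →L[ℂ] X)) (B : Fin N → (U →L[ℂ] X)) (C : Fin N → (X →L[ℂ] Y))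
    (D : Fin N → (U →L[ℂ] Y)) (θ : (Fin N → ℂ) → (U →L[ℂ] Y))
    (hθ : ∀ᶠ z in nhds 0, IsUnit (1 - pencil A z) ∧ θ z = transfer A B C D z)
    (hm : 1 < m) (hzero : HasZeroOfOrder θ m) :
    (∀ k, D k = 0) ∧
      (∀ᶠ z in nhds 0, θ z =
        (pencil C z).comp ((((pencil A z) ^ (m - 2)).comp
          (Ring.inverse (1 - pencil A z))).comp (pencil B z))) ∧
      (∀ j, j < m - 2 → ∀ z : Fin N → ℂ,
        (pencil C z).comp (((pencil A z) ^ j).comp (pencil B z)) = 0) := by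
  obtain ⟨p, hp, hvanish, -⟩ := hzero
  have hcoeff : ∀ z n, n < m → transferCoeff A B C D z n = 0 := fun z n hn => by
    rw [transferCoeff_eq_of_hasFPowerSeriesAt (hθ.mono fun _ h => h.2) hp z]
    exact hvanish n hn z
  have hD : ∀ k, D k = 0 := fun k => by
    simpa only [transferCoeff, pencil_single] using hcoeff (Pi.single k 1) 1 hm
  have hCAB : ∀ j, j < m - 2 → ∀ z : Fin N → ℂ,
      (pencil C z).comp (((pencil A z) ^ j).comp (pencil B z)) = 0 :=
    fun j hj z => hcoeff z (j + 2) (by omega)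
  refine ⟨hD, ?_, hCAB⟩
  filter_upwards [hθ] with z ⟨hunit, hθz⟩
  have hDz : pencil D z = 0 := by simp [pencil, hD]
  rw [hθz, transfer, hDz, zero_add,
    ContinuousLinearMap.comp_inverse_one_sub_comp_eq_of_forall_lt hunit fun i hi => hCAB i hi z]

/-- if the transfer function `θ(z) = zD + zC(I − zA)⁻¹zB` of an `N`-parametric
system has a zero of multiplicity `m > 1` at `z = 0`, then `D = 0`,
`θ(z) = zC (zA)^{m−2} (I − zA)⁻¹ zB` near `0`, and `zC (zA)^j zB ≡ 0` for all `j < m − 2`. -/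
theorem transfer_function_multiple_zero {N m : ℕ} {X U Y : Type}
    [NormedAddCommGroup X] [InnerProductSpace ℂ X] [CompleteSpace X]
    [TopologicalSpace.SeparableSpace X]
    [NormedAddCommGroup U] [InnerProductSpace ℂ U] [CompleteSpace U]
    [TopologicalSpace.SeparableSpace U]
    [NormedAddCommGroup Y] [InnerProductSpace ℂ Y] [CompleteSpace Y]
    [TopologicalSpace.SeparableSpace Y]
    (A : Fin N → (X →L[ℂ] X)) (B : Fin N → (U →L[ℂ] X)) (C : Fin N → (X →L[ℂ] Y))
    (D : Fin N → (U →L[ℂ] Y)) (θ : (Fin N → ℂ) → (U →L[ℂ] Y))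
    (hθ : ∀ᶠ z in nhds 0, IsUnit (1 - pencil A z) ∧ θ z = transfer A B C D z)
    (hm : 1 < m) (hzero : HasZeroOfOrder θ m) :
    (∀ k, D k = 0) ∧
      (∀ᶠ z in nhds 0, θ z =
        (pencil C z).comp ((((pencil A z) ^ (m - 2)).comp
          (Ring.inverse (1 - pencil A z))).comp (pencil B z))) ∧
      (∀ j, j < m - 2 → ∀ z : Fin N → ℂ,
        (pencil C z).comp (((pencil A z) ^ j).comp (pencil B z)) = 0) :=
  transfer_function_multiple_zero_general A B C D θ hθ hm hzero
end
end

section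
/- Any homogeneous operator-valued polynomial θ(z) of degree m > 0 in z ∈ ℂ^N with values in [U,Y] factors as a product of homogeneous linear factors: there exist separable Hilbert spaces Y⁽⁰⁾ = Y, Y⁽¹⁾,…,Y⁽ᵐ⁾ = U and operators L_k^{(j)} : Y⁽ʲ⁾ → Y⁽ʲ⁻¹⁾ such that θ(z) = (zL⁽¹⁾)(zL⁽²⁾)⋯(zL⁽ᵐ⁾) for all z ∈ ℂ^N. -/
noncomputable section

open scoped ComplexConjugate

variable {N : ℕ}

/-!
Expanding the first argument of `P` in the standard basis gives
`P(z,…,z) = Σₖ zₖ P(eₖ,z,…,z)`. Stacking the operators `P(eₖ,z,…,z)` into a column with values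
in the `ℓ²`-sum `Y^N`, which is again a separable Hilbert space, writes this as `(zΠ) Q(z,…,z)`,
where `Πₖ : Y^N → Y` are the coordinate projections and `Q` has degree one less than `P`.
Induction on the degree factors `Q`, and `zΠ` becomes the first factor of the chain.
-/

section Pencil

variable {E F G : Type*} [NormedAddCommGroup E] [NormedAddCommGroup F] [NormedAddCommGroup G]
  [NormedSpace ℂ E] [NormedSpace ℂ F] [NormedSpace ℂ G]

theorem pencil_comp (T : Fin N → (F →L[ℂ] G)) (z : Fin N → ℂ) (A : E →L[ℂ] F) :
    (pencil T z).comp A = pencil (fun k => (T k).comp A) z := by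
  simp only [pencil, ContinuousLinearMap.finsetSum_comp, ContinuousLinearMap.smul_comp]

/-- The column operator `E → F^N` into the `ℓ²`-sum with rows `T k`, as a bounded linear function
of `T`. -/
def columnL : (Fin N → (E →L[ℂ] F)) →L[ℂ] (E →L[ℂ] PiLp 2 (fun _ : Fin N => F)) :=
  (ContinuousLinearMap.compL ℂ E _ _
      (PiLp.continuousLinearEquiv 2 ℂ (fun _ : Fin N => F)).symm.toContinuousLinearMap).comp
    (ContinuousLinearMap.piEquivL ℂ E (fun _ : Fin N => F)).toContinuousLinearMap

theorem pencil_proj_comp_columnL (T : Fin N → (E →L[ℂ] F)) (z : Fin N → ℂ) :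
    (pencil (fun k => PiLp.proj 2 (𝕜 := ℂ) (fun _ : Fin N => F) k) z).comp (columnL T) =
      pencil T z := by
  ext x
  simp [pencil, columnL]

theorem ContinuousMultilinearMap.exists_apply_const_eq_pencil_proj_comp {n : ℕ}
    (P : ContinuousMultilinearMap ℂ (fun _ : Fin (n + 1) => (Fin N → ℂ)) (E →L[ℂ] F)) :
    ∃ Q : ContinuousMultilinearMap ℂ (fun _ : Fin n => (Fin N → ℂ))
        (E →L[ℂ] PiLp 2 (fun _ : Fin N => F)),
      ∀ z, P (fun _ => z) =
        (pencil (fun k => PiLp.proj 2 (𝕜 := ℂ) (fun _ : Fin N => F) k) z).comp (Q fun _ => z) := by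
  refine ⟨columnL.compContinuousMultilinearMap
    (ContinuousMultilinearMap.pi fun k => P.curryLeft (Pi.single k 1)), fun z => ?_⟩
  have hexpand : P.curryLeft z = ∑ k, z k • P.curryLeft (Pi.single k 1) := by
    conv_lhs => rw [pi_eq_sum_univ' z]
    rw [_root_.map_sum]
    simp only [map_smul]
  calc P (fun _ => z)
      = P.curryLeft z (fun _ => z) := by
        rw [curryLeft_apply]
        exact congrArg P (Fin.cons_self_tail _).symm
    _ = pencil (fun k => P.curryLeft (Pi.single k 1) fun _ => z) z := by
      simp only [hexpand, pencil, sum_apply, smul_apply]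
    _ = _ := (pencil_proj_comp_columnL _ z).symm

end Pencil

theorem chainMul_succ_eq_pencil_comp {Ysp : ℕ → Type*} [∀ j, NormedAddCommGroup (Ysp j)]
    [∀ j, NormedSpace ℂ (Ysp j)] (L : (j : ℕ) → Fin N → (Ysp (j + 1) →L[ℂ] Ysp j))
    (z : Fin N → ℂ) (m : ℕ) :
    chainMul L z (m + 1) =
      (pencil (L 0) z).comp (chainMul (Ysp := fun j => Ysp (j + 1)) (fun j => L (j + 1)) z m) := by
  induction m with
  | zero => rfl
  | succ m ih =>
    exact (congrArg (·.comp (pencil (L (m + 1)) z)) ih).trans (ContinuousLinearMap.comp_assoc ..)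

def HasChainFactorization {U Y : Type*} [NormedAddCommGroup U] [NormedSpace ℂ U]
    [NormedAddCommGroup Y] [NormedSpace ℂ Y] (m : ℕ) (θ : (Fin N → ℂ) → (U →L[ℂ] Y)) : Prop :=
  ∃ (Ysp : ℕ → HilbertSp) (eY : (Ysp 0).carrier ≃ₗᵢ[ℂ] Y) (eU : U ≃ₗᵢ[ℂ] (Ysp m).carrier)
    (L : (j : ℕ) → Fin N → ((Ysp (j + 1)).carrier →L[ℂ] (Ysp j).carrier)),
    ∀ z, θ z = eY.toLinearIsometry.toContinuousLinearMap.comp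
      ((chainMul (Ysp := fun j => (Ysp j).carrier) L z m).comp
        eU.toLinearIsometry.toContinuousLinearMap)

theorem hasChainFactorization_pencil {U Y : Type} [NormedAddCommGroup U] [InnerProductSpace ℂ U]
    [CompleteSpace U] [TopologicalSpace.SeparableSpace U] [NormedAddCommGroup Y]
    [InnerProductSpace ℂ Y] [CompleteSpace Y] [TopologicalSpace.SeparableSpace Y]
    (T : Fin N → (U →L[ℂ] Y)) :
    HasChainFactorization 1 (pencil T) :=
  ⟨fun j => Nat.casesOn j ⟨Y⟩ fun _ => ⟨U⟩, .refl ℂ Y, .refl ℂ U,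
    fun j => Nat.casesOn j T fun _ _ => 0, fun _ => rfl⟩

theorem HasChainFactorization.pencil_comp {U Y' : Type*} {Y : Type} [NormedAddCommGroup U]
    [NormedSpace ℂ U] [NormedAddCommGroup Y'] [NormedSpace ℂ Y'] [NormedAddCommGroup Y]
    [InnerProductSpace ℂ Y] [CompleteSpace Y] [TopologicalSpace.SeparableSpace Y] {m : ℕ}
    {θ : (Fin N → ℂ) → (U →L[ℂ] Y')} (hθ : HasChainFactorization m θ) (T : Fin N → (Y' →L[ℂ] Y)) :
    HasChainFactorization (m + 1) fun z => (pencil T z).comp (θ z) := by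
  obtain ⟨Ysp, eY, eU, L, hL⟩ := hθ
  refine ⟨fun j => Nat.casesOn j ⟨Y⟩ Ysp, .refl ℂ Y, eU,
    fun j => Nat.casesOn j (fun k => (T k).comp eY.toLinearIsometry.toContinuousLinearMap) L,
    fun z => ?_⟩
  change (pencil T z).comp (θ z) = _
  rw [chainMul_succ_eq_pencil_comp, hL z, ← ContinuousLinearMap.comp_assoc, _root_.pencil_comp]
  rfl

/-- Corollary `cor:pol`: every homogeneous operator-valued polynomial of
degree `m > 0` is a product `(zL⁽¹⁾)(zL⁽²⁾)⋯(zL⁽ᵐ⁾)` of linear homogeneous factors along a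
chain of separable Hilbert spaces with `Y⁽⁰⁾ = Y` and `Y⁽ᵐ⁾ = U`. -/
theorem homogeneous_polynomial_linear_factorization {N m : ℕ} {U Y : Type}
    [NormedAddCommGroup U] [InnerProductSpace ℂ U] [CompleteSpace U]
    [TopologicalSpace.SeparableSpace U]
    [NormedAddCommGroup Y] [InnerProductSpace ℂ Y] [CompleteSpace Y]
    [TopologicalSpace.SeparableSpace Y]
    (P : ContinuousMultilinearMap ℂ (fun _ : Fin m => (Fin N → ℂ)) (U →L[ℂ] Y))
    (hm : 0 < m) :
    ∃ (Ysp : ℕ → HilbertSp) (eY : (Ysp 0).carrier ≃ₗᵢ[ℂ] Y) (eU : U ≃ₗᵢ[ℂ] (Ysp m).carrier)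
      (L : (j : ℕ) → Fin N → ((Ysp (j + 1)).carrier →L[ℂ] (Ysp j).carrier)),
      ∀ z : Fin N → ℂ, P (fun _ => z) =
        (eY.toLinearIsometry.toContinuousLinearMap.comp
            ((chainMul (Ysp := fun j => (Ysp j).carrier) L z m).comp
              eU.toLinearIsometry.toContinuousLinearMap)) := by
  change HasChainFactorization m fun z => P fun _ => z
  induction m, hm using Nat.le_induction generalizing Y with
  | base =>
    obtain ⟨Q, hQ⟩ := P.exists_apply_const_eq_pencil_proj_comp
    have hP : (fun z => P fun _ => z) = pencil fun k => (PiLp.proj 2 _ k).comp (Q fun _ => 0) := by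
      ext1 z
      rw [hQ, pencil_comp, Subsingleton.elim (fun _ => z) fun _ => 0]
    rw [hP]
    exact hasChainFactorization_pencil _
  | succ n _ ih =>
    obtain ⟨Q, hQ⟩ := P.exists_apply_const_eq_pencil_proj_comp
    rw [show (fun z => P fun _ => z) = _ from funext hQ]
    exact (ih Q).pencil_comp _
end
end

section
/- Let α⁽¹⁾ and α⁽²⁾ be N-parametric linear systems with operator tuples (A⁽¹⁾,B⁽¹⁾,C⁽¹⁾,D⁽¹⁾) on spaces (X⁽¹⁾, U, V) and (A⁽²⁾,B⁽²⁾,C⁽²⁾,D⁽²⁾) on (X⁽²⁾, V, Y), and let α = α⁽²⁾α⁽¹⁾ be their cascade connection with state space X = X⁽²⁾ ⊕ V ⊕ X⁽¹⁾ defined by the block formula zG_α = [[zA⁽²⁾, zB⁽²⁾, 0, 0],[0,0,zC⁽¹⁾,zD⁽¹⁾],[0,0,zA⁽¹⁾,zB⁽¹⁾],[zC⁽²⁾, zD⁽²⁾, 0, 0]]. If the transfer functions θ_{α⁽¹⁾}, θ_{α⁽²⁾} are holomorphic on a neighborhood Γ of 0, then the transfer function of α satisfies θ_α(z) = θ_{α⁽²⁾}(z)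 θ_{α⁽¹⁾}(z) for all z ∈ Γ. -/
/-!
In the coordinates `X⁽²⁾ ⊕ (V ⊕ X⁽¹⁾)` the operator `1 - zA` of the cascade is block upper
triangular, with diagonal blocks `1 - zA⁽²⁾` and `1 - [[0, zC⁽¹⁾], [0, zA⁽¹⁾]]`; the latter is again
upper triangular, with diagonal blocks `1` and `1 - zA⁽¹⁾`. Hence `1 - zA` is invertible, with the
explicit triangular inverse. Feeding `zB u = (0, zD⁽¹⁾u, zB⁽¹⁾u)` through that inverse, the
`V`-component becomes `θ_{α⁽¹⁾}(z) u`, which `α⁽²⁾` then processes, giving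
`θ_α(z) u = θ_{α⁽²⁾}(z) θ_{α⁽¹⁾}(z) u`.
-/

noncomputable section

open scoped ComplexConjugate

variable {N : ℕ}

section cascade

variable {N : ℕ} {X1 V X2 U Y : Type*}
  [NormedAddCommGroup X1] [NormedAddCommGroup V] [NormedAddCommGroup X2]
  [NormedAddCommGroup U] [NormedAddCommGroup Y]
  [NormedSpace ℂ X1] [NormedSpace ℂ V] [NormedSpace ℂ X2]
  [NormedSpace ℂ U] [NormedSpace ℂ Y]

/-- the main operators `A_k` of the cascade connection `α⁽²⁾α⁽¹⁾`, acting on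
`X⁽²⁾ ⊕ V ⊕ X⁽¹⁾` by the block matrix `[[A⁽²⁾, B⁽²⁾, 0],[0,0,C⁽¹⁾],[0,0,A⁽¹⁾]]` -/
def cascA (A1 : Fin N → (X1 →L[ℂ] X1)) (C1 : Fin N → (X1 →L[ℂ] V))
    (A2 : Fin N → (X2 →L[ℂ] X2)) (B2 : Fin N → (V →L[ℂ] X2)) :
    Fin N → (hS X2 (hS V X1) →L[ℂ] hS X2 (hS V X1)) := fun k =>
  block2 (A2 k) ((B2 k).comp (fstL V X1)) 0 (block2 0 (C1 k) 0 (A1 k))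

/-- the input operators `B_k = col(0, D⁽¹⁾, B⁽¹⁾)` of the cascade connection -/
def cascB (B1 : Fin N → (U →L[ℂ] X1)) (D1 : Fin N → (U →L[ℂ] V)) :
    Fin N → (U →L[ℂ] hS X2 (hS V X1)) := fun k =>
  (inrL X2 (hS V X1)).comp ((inlL V X1).comp (D1 k) + (inrL V X1).comp (B1 k))

/-- the output operators `C_k = [C⁽²⁾, D⁽²⁾, 0]` of the cascade connection -/
def cascC (C2 : Fin N → (X2 →L[ℂ] Y)) (D2 : Fin N → (V →L[ℂ] Y)) :
    Fin N → (hS X2 (hS V X1) →L[ℂ] Y) := fun k =>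
  (C2 k).comp (fstL X2 (hS V X1)) + (D2 k).comp ((fstL V X1).comp (sndL X2 (hS V X1)))

/-- the external operators `D_k = 0` of the cascade connection -/
def cascD : Fin N → (U →L[ℂ] Y) := fun _ => 0

end cascade

section cc

variable {N : ℕ} {X U Y : Type*}
  [NormedAddCommGroup X] [InnerProductSpace ℂ X] [CompleteSpace X]
  [NormedAddCommGroup U] [InnerProductSpace ℂ U] [CompleteSpace U]
  [NormedAddCommGroup Y] [InnerProductSpace ℂ Y] [CompleteSpace Y]

/-- the monomial `p(A, A*)` associated with a word `w` in the `2N` noncommuting letters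
`A_1, …, A_N, A_1^*, …, A_N^*` -/
def wordOp (A : Fin N → (X →L[ℂ] X)) (w : List (Fin N × Bool)) : X →L[ℂ] X :=
  (w.map (fun p => if p.2 then A p.1 else ContinuousLinearMap.adjoint (A p.1))).prod

/-- the generating set `⋃ p(A,A*)(B_k U + C_j* Y)` of the closely connected subspace -/
def ccSet (A : Fin N → (X →L[ℂ] X)) (B : Fin N → (U →L[ℂ] X)) (C : Fin N → (X →L[ℂ] Y)) :
    Set X :=
  {x | ∃ (w : List (Fin N × Bool)) (k : Fin N) (u : U), x = wordOp A w (B k u)} ∪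
    {x | ∃ (w : List (Fin N × Bool)) (j : Fin N) (y : Y),
      x = wordOp A w ((ContinuousLinearMap.adjoint (C j)) y)}

/-- the closely connected subspace `X_cc`: the smallest closed subspace containing all
`B_k U`, `C_j^* Y` and reducing every `A_k` -/
def ccSpace (A : Fin N → (X →L[ℂ] X)) (B : Fin N → (U →L[ℂ] X)) (C : Fin N → (X →L[ℂ] Y)) :
    Submodule ℂ X :=
  (Submodule.span ℂ (ccSet A B C)).topologicalClosure

/-- a system is closely connected if `X_cc = X` -/
def CloselyConnected (A : Fin N → (X →L[ℂ] X)) (B : Fin N → (U →L[ℂ] X))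
    (C : Fin N → (X →L[ℂ] Y)) : Prop :=
  ccSpace A B C = ⊤

end cc

lemma hS.ext {E F : Type*} {x y : hS E F} (h1 : x.fst = y.fst) (h2 : x.snd = y.snd) : x = y :=
  (WithLp.ext_iff 2).2 (Prod.ext h1 h2)

section DirectSum

variable {E F E' F' : Type*} [NormedAddCommGroup E] [NormedAddCommGroup F]
  [NormedSpace ℂ E] [NormedSpace ℂ F]
  [NormedAddCommGroup E'] [NormedAddCommGroup F'] [NormedSpace ℂ E'] [NormedSpace ℂ F']

@[simp] lemma hS.fst_sum {ι : Type*} (s : Finset ι) (f : ι → hS E F) :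
    (∑ i ∈ s, f i).fst = ∑ i ∈ s, (f i).fst :=
  map_sum (WithLp.fstL 2 ℂ E F) f s

@[simp] lemma hS.snd_sum {ι : Type*} (s : Finset ι) (f : ι → hS E F) :
    (∑ i ∈ s, f i).snd = ∑ i ∈ s, (f i).snd :=
  map_sum (WithLp.sndL 2 ℂ E F) f s

@[simp] lemma fstL_apply (x : hS E F) : fstL E F x = x.fst := rfl
@[simp] lemma sndL_apply (x : hS E F) : sndL E F x = x.snd := rfl
@[simp] lemma inlL_apply (e : E) : inlL E F e = WithLp.toLp 2 (e, 0) := rfl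
@[simp] lemma inrL_apply (f : F) : inrL E F f = WithLp.toLp 2 (0, f) := rfl

@[simp] lemma block2_apply (A : E →L[ℂ] E') (B : F →L[ℂ] E') (C : E →L[ℂ] F')
    (D : F →L[ℂ] F') (x : hS E F) :
    block2 A B C D x = WithLp.toLp 2 (A x.fst + B x.snd, C x.fst + D x.snd) := by
  apply hS.ext <;> simp [block2]

end DirectSum

section Pencil

variable {N : ℕ} {E F E' F' : Type*} [NormedAddCommGroup E] [NormedAddCommGroup F]
  [NormedSpace ℂ E] [NormedSpace ℂ F]
  [NormedAddCommGroup E'] [NormedAddCommGroup F'] [NormedSpace ℂ E'] [NormedSpace ℂ F']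

lemma pencil_apply (T : Fin N → (E →L[ℂ] F)) (z : Fin N → ℂ) (x : E) :
    pencil T z x = ∑ k, z k • T k x := by
  simp [pencil]

lemma pencil_block2 (A : Fin N → (E →L[ℂ] E')) (B : Fin N → (F →L[ℂ] E'))
    (C : Fin N → (E →L[ℂ] F')) (D : Fin N → (F →L[ℂ] F')) (z : Fin N → ℂ) :
    pencil (fun k => block2 (A k) (B k) (C k) (D k)) z =
      block2 (pencil A z) (pencil B z) (pencil C z) (pencil D z) := by
  ext x
  apply hS.ext <;> simp [pencil_apply, Finset.sum_add_distrib]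

@[simp] lemma pencil_zero (z : Fin N → ℂ) : pencil (fun _ => (0 : E →L[ℂ] F)) z = 0 := by
  simp [pencil]

lemma pencil_add (S T : Fin N → (E →L[ℂ] F)) (z : Fin N → ℂ) :
    pencil (fun k => S k + T k) z = pencil S z + pencil T z := by
  simp [pencil, Finset.sum_add_distrib]

lemma pencil_comp_left (P : F →L[ℂ] E') (T : Fin N → (E →L[ℂ] F)) (z : Fin N → ℂ) :
    pencil (fun k => P.comp (T k)) z = P.comp (pencil T z) := by
  simp [pencil, ContinuousLinearMap.comp_finsetSum]

lemma pencil_comp_right (T : Fin N → (F →L[ℂ] E')) (P : E →L[ℂ] F) (z : Fin N → ℂ) :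
    pencil (fun k => (T k).comp P) z = (pencil T z).comp P := by
  simp [pencil, ContinuousLinearMap.finsetSum_comp]

end Pencil

section CascadePencils

variable {N : ℕ} {X1 V X2 U Y : Type*}
  [NormedAddCommGroup X1] [NormedAddCommGroup V] [NormedAddCommGroup X2]
  [NormedAddCommGroup U] [NormedAddCommGroup Y]
  [NormedSpace ℂ X1] [NormedSpace ℂ V] [NormedSpace ℂ X2]
  [NormedSpace ℂ U] [NormedSpace ℂ Y]

lemma pencil_cascA (A1 : Fin N → (X1 →L[ℂ] X1)) (C1 : Fin N → (X1 →L[ℂ] V))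
    (A2 : Fin N → (X2 →L[ℂ] X2)) (B2 : Fin N → (V →L[ℂ] X2)) (z : Fin N → ℂ) :
    pencil (cascA A1 C1 A2 B2) z =
      block2 (pencil A2 z) ((pencil B2 z).comp (fstL V X1)) 0
        (block2 0 (pencil C1 z) 0 (pencil A1 z)) := by
  unfold cascA
  simp only [pencil_block2, pencil_comp_right, pencil_zero]

lemma pencil_cascB (B1 : Fin N → (U →L[ℂ] X1)) (D1 : Fin N → (U →L[ℂ] V)) (z : Fin N → ℂ) :
    pencil (cascB (X2 := X2) B1 D1) z =
      (inrL X2 (hS V X1)).comp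
        ((inlL V X1).comp (pencil D1 z) + (inrL V X1).comp (pencil B1 z)) := by
  unfold cascB
  simp only [pencil_comp_left, pencil_add]

lemma pencil_cascC (C2 : Fin N → (X2 →L[ℂ] Y)) (D2 : Fin N → (V →L[ℂ] Y)) (z : Fin N → ℂ) :
    pencil (cascC (X1 := X1) C2 D2) z =
      (pencil C2 z).comp (fstL X2 (hS V X1)) +
        (pencil D2 z).comp ((fstL V X1).comp (sndL X2 (hS V X1))) := by
  unfold cascC
  simp only [pencil_add, pencil_comp_right]

lemma pencil_cascD (z : Fin N → ℂ) : pencil (cascD : Fin N → (U →L[ℂ] Y)) z = 0 :=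
  pencil_zero z

end CascadePencils

section Inverse

variable {E F : Type*} [NormedAddCommGroup E] [NormedAddCommGroup F]
  [NormedSpace ℂ E] [NormedSpace ℂ F]

lemma apply_ringInverse_apply {T : E →L[ℂ] E} (h : IsUnit T) (x : E) :
    T (Ring.inverse T x) = x := by
  simpa using congr($(Ring.mul_inverse_cancel T h) x)

lemma ringInverse_apply_apply {T : E →L[ℂ] E} (h : IsUnit T) (x : E) :
    Ring.inverse T (T x) = x := by
  simpa using congr($(Ring.inverse_mul_cancel T h) x)

lemma isUnit_one_sub_block2_zero {a : E →L[ℂ] E} (b : F →L[ℂ] E) {d : F →L[ℂ] F}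
    (ha : IsUnit (1 - a)) (hd : IsUnit (1 - d)) :
    IsUnit (1 - block2 a b 0 d) ∧
      Ring.inverse (1 - block2 a b 0 d) =
        block2 (Ring.inverse (1 - a)) ((Ring.inverse (1 - a)).comp (b.comp (Ring.inverse (1 - d))))
          0 (Ring.inverse (1 - d)) := by
  set ea := Ring.inverse (1 - a)
  set ed := Ring.inverse (1 - d)
  have ha_r : ∀ x, ea x - a (ea x) = x := by simpa using apply_ringInverse_apply ha
  have ha_l : ∀ x, ea x - ea (a x) = x := by simpa using ringInverse_apply_apply ha
  have hd_r : ∀ x, ed x - d (ed x) = x := by simpa using apply_ringInverse_apply hd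
  have hd_l : ∀ x, ed (x - d x) = x := by simpa using ringInverse_apply_apply hd
  set E' := block2 ea (ea.comp (b.comp ed)) 0 ed
  have hright : (1 - block2 a b 0 d) * E' = 1 := by
    ext x
    apply hS.ext
    · simp only [mul_apply_eq_comp, block2_apply, ContinuousLinearMap.comp_apply, zero_apply,
        zero_add, sub_apply, one_apply_eq_self, WithLp.toLp_fst, map_add, WithLp.toLp_snd,
        WithLp.sub_fst, E']
      linear_combination (norm := module) ha_r x.fst + ha_r (b (ed x.snd))
    · simp [E', hd_r]
  have hleft : E' * (1 - block2 a b 0 d) = 1 := by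
    ext x
    apply hS.ext
    · simp only [mul_apply_eq_comp, sub_apply, one_apply_eq_self, block2_apply, zero_apply,
        zero_add, WithLp.sub_fst, WithLp.toLp_fst, map_sub, map_add,
        WithLp.toLp_snd, ContinuousLinearMap.comp_apply, E']
      have hb : ea (b (ed x.snd)) - ea (b (ed (d x.snd))) = ea (b x.snd) := by
        rw [← map_sub, ← map_sub, ← map_sub, hd_l]
      linear_combination (norm := module) ha_l x.fst + hb
    · simp [E', hd_l]
  let u : (hS E F →L[ℂ] hS E F)ˣ := ⟨_, E', hright, hleft⟩
  exact ⟨u.isUnit, Ring.inverse_unit u⟩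

end Inverse

theorem cascade_transfer_function_multiplies_general {N : ℕ} {X1 V X2 U Y : Type}
    [NormedAddCommGroup X1] [InnerProductSpace ℂ X1]
    [NormedAddCommGroup V] [InnerProductSpace ℂ V]
    [NormedAddCommGroup X2] [InnerProductSpace ℂ X2]
    [NormedAddCommGroup U] [InnerProductSpace ℂ U]
    [NormedAddCommGroup Y] [InnerProductSpace ℂ Y]
    (A1 : Fin N → (X1 →L[ℂ] X1)) (B1 : Fin N → (U →L[ℂ] X1))
    (C1 : Fin N → (X1 →L[ℂ] V)) (D1 : Fin N → (U →L[ℂ] V))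
    (A2 : Fin N → (X2 →L[ℂ] X2)) (B2 : Fin N → (V →L[ℂ] X2))
    (C2 : Fin N → (X2 →L[ℂ] Y)) (D2 : Fin N → (V →L[ℂ] Y))
    (Γ : Set (Fin N → ℂ))
    (hhol : ∀ z ∈ Γ, IsUnit (1 - pencil A1 z) ∧ IsUnit (1 - pencil A2 z)) :
    ∀ z ∈ Γ, IsUnit (1 - pencil (cascA A1 C1 A2 B2) z) ∧
      transfer (cascA A1 C1 A2 B2) (cascB B1 D1) (cascC C2 D2) cascD z =
        (transfer A2 B2 C2 D2 z).comp (transfer A1 B1 C1 D1 z) := by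
  intro z hz
  obtain ⟨h1, h2⟩ := hhol z hz
  obtain ⟨hV, hV_inv⟩ :=
    isUnit_one_sub_block2_zero (pencil C1 z) (by simp : IsUnit (1 - (0 : V →L[ℂ] V))) h1
  obtain ⟨hX, hX_inv⟩ := isUnit_one_sub_block2_zero ((pencil B2 z).comp (fstL V X1)) h2 hV
  refine ⟨pencil_cascA A1 C1 A2 B2 z ▸ hX, ?_⟩
  rw [transfer, pencil_cascA, hX_inv, hV_inv, pencil_cascB, pencil_cascC, pencil_cascD]
  ext u
  simp only [transfer, sub_zero, Ring.inverse_one, ContinuousLinearMap.comp_add,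
    ContinuousLinearMap.add_comp, ContinuousLinearMap.comp_apply, add_apply, zero_apply,
    one_apply_eq_self, block2_apply, inlL_apply, inrL_apply, fstL_apply, sndL_apply,
    WithLp.toLp_fst, WithLp.toLp_snd, map_zero, zero_add, add_zero]
  abel

/-- formula `eq:factor-tf`: the transfer function of the cascade connection
`α = α⁽²⁾α⁽¹⁾` is the product `θ_α = θ_{α⁽²⁾} θ_{α⁽¹⁾}` on any neighbourhood `Γ` of `0` on
which both transfer functions are holomorphic. -/
theorem cascade_transfer_function_multiplies {N : ℕ} {X1 V X2 U Y : Type}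
    [NormedAddCommGroup X1] [InnerProductSpace ℂ X1] [CompleteSpace X1]
    [TopologicalSpace.SeparableSpace X1]
    [NormedAddCommGroup V] [InnerProductSpace ℂ V] [CompleteSpace V]
    [TopologicalSpace.SeparableSpace V]
    [NormedAddCommGroup X2] [InnerProductSpace ℂ X2] [CompleteSpace X2]
    [TopologicalSpace.SeparableSpace X2]
    [NormedAddCommGroup U] [InnerProductSpace ℂ U] [CompleteSpace U]
    [TopologicalSpace.SeparableSpace U]
    [NormedAddCommGroup Y] [InnerProductSpace ℂ Y] [CompleteSpace Y]
    [TopologicalSpace.SeparableSpace Y]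
    (A1 : Fin N → (X1 →L[ℂ] X1)) (B1 : Fin N → (U →L[ℂ] X1))
    (C1 : Fin N → (X1 →L[ℂ] V)) (D1 : Fin N → (U →L[ℂ] V))
    (A2 : Fin N → (X2 →L[ℂ] X2)) (B2 : Fin N → (V →L[ℂ] X2))
    (C2 : Fin N → (X2 →L[ℂ] Y)) (D2 : Fin N → (V →L[ℂ] Y))
    (Γ : Set (Fin N → ℂ)) (hΓ : Γ ∈ nhds 0)
    (hhol : ∀ z ∈ Γ, IsUnit (1 - pencil A1 z) ∧ IsUnit (1 - pencil A2 z)) :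
    ∀ z ∈ Γ, IsUnit (1 - pencil (cascA A1 C1 A2 B2) z) ∧
      transfer (cascA A1 C1 A2 B2) (cascB B1 D1) (cascC C2 D2) cascD z =
        (transfer A2 B2 C2 D2 z).comp (transfer A1 B1 C1 D1 z) :=
  cascade_transfer_function_multiplies_general A1 B1 C1 D1 A2 B2 C2 D2 Γ hhol
end
end

section
/- If the cascade connection α = α⁽²⁾α⁽¹⁾ of two N-parametric systems is closely connected, then both α⁽¹⁾ and α⁽²⁾ are closely connected. -/
noncomputable section

open scoped ComplexConjugate

variable {N : ℕ}

section cc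

variable {N : ℕ} {X U Y : Type*}
  [NormedAddCommGroup X] [InnerProductSpace ℂ X] [CompleteSpace X]
  [NormedAddCommGroup U] [InnerProductSpace ℂ U] [CompleteSpace U]
  [NormedAddCommGroup Y] [InnerProductSpace ℂ Y] [CompleteSpace Y]

/-! The orthogonal complement of `X_cc` is the largest set that is invariant under every `A_k`
and `A_k^*` and on which every `B_k^*` and `C_k` vanishes: a part of the state space that no
input reaches and no output sees. For a factor of the cascade such a set transports to one of
the cascade itself: the last coordinate for `α⁽¹⁾` (where `C⁽¹⁾ = 0` keeps `A_k` from leaking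
into `V`), the first one for `α⁽²⁾` (where `B⁽²⁾* = 0` does the same for `A_k^*`). Close
connectedness of the cascade forces these sets to be zero. -/

open ContinuousLinearMap Set
open scoped InnerProductSpace

section decoupled

variable {N : ℕ} {X U Y : Type*}
  [NormedAddCommGroup X] [InnerProductSpace ℂ X] [CompleteSpace X]
  [NormedAddCommGroup U] [InnerProductSpace ℂ U]
  [NormedAddCommGroup Y] [InnerProductSpace ℂ Y]
  {A : Fin N → (X →L[ℂ] X)} {B : Fin N → (U →L[ℂ] X)} {C : Fin N → (X →L[ℂ] Y)}

lemma wordOp_cons_true (k : Fin N) (w : List (Fin N × Bool)) (x : X) :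
    wordOp A ((k, true) :: w) x = A k (wordOp A w x) := by
  simp [wordOp]

lemma wordOp_cons_false (k : Fin N) (w : List (Fin N × Bool)) (x : X) :
    wordOp A ((k, false) :: w) x = adjoint (A k) (wordOp A w x) := by
  simp [wordOp]

lemma inner_wordOp_eq_zero_of_mapsTo {M : Set X} (hA : ∀ k, MapsTo (A k) M M)
    (hA' : ∀ k, MapsTo (adjoint (A k)) M M) {g : X} (hg : ∀ x ∈ M, ⟪g, x⟫_ℂ = 0)
    (w : List (Fin N × Bool)) : ∀ x ∈ M, ⟪wordOp A w g, x⟫_ℂ = 0 := by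
  induction w with
  | nil => simpa [wordOp] using hg
  | cons p w ih =>
    obtain ⟨k, _ | _⟩ := p <;> intro x hx
    · rw [wordOp_cons_false, adjoint_inner_left]
      exact ih _ (hA k hx)
    · rw [wordOp_cons_true, ← adjoint_inner_right]
      exact ih _ (hA' k hx)

section

variable [CompleteSpace Y]

lemma mapsTo_ccSet (k : Fin N) : MapsTo (A k) (ccSet A B C) (ccSet A B C) := by
  rintro _ (⟨w, j, u, rfl⟩ | ⟨w, j, y, rfl⟩)
  · exact Or.inl ⟨(k, true) :: w, j, u, (wordOp_cons_true ..).symm⟩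
  · exact Or.inr ⟨(k, true) :: w, j, y, (wordOp_cons_true ..).symm⟩

lemma adjoint_mapsTo_ccSet (k : Fin N) :
    MapsTo (adjoint (A k)) (ccSet A B C) (ccSet A B C) := by
  rintro _ (⟨w, j, u, rfl⟩ | ⟨w, j, y, rfl⟩)
  · exact Or.inl ⟨(k, false) :: w, j, u, (wordOp_cons_false ..).symm⟩
  · exact Or.inr ⟨(k, false) :: w, j, y, (wordOp_cons_false ..).symm⟩

lemma input_mem_ccSet (k : Fin N) (u : U) : B k u ∈ ccSet A B C :=
  Or.inl ⟨[], k, u, by simp [wordOp]⟩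

lemma adjoint_output_mem_ccSet (k : Fin N) (y : Y) : adjoint (C k) y ∈ ccSet A B C :=
  Or.inr ⟨[], k, y, by simp [wordOp]⟩

lemma mem_orthogonal_ccSpace_iff {x : X} :
    x ∈ (ccSpace A B C)ᗮ ↔ ∀ s ∈ ccSet A B C, ⟪s, x⟫_ℂ = 0 := by
  rw [ccSpace, Submodule.orthogonal_closure]
  refine ⟨fun hx s hs => hx s (Submodule.subset_span hs), fun hx s hs => ?_⟩
  have hspan : Submodule.span ℂ (ccSet A B C) ≤ (ℂ ∙ x)ᗮ := Submodule.span_le.mpr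
    fun s hs => Submodule.mem_orthogonal_singleton_iff_inner_left.mpr (hx s hs)
  exact Submodule.mem_orthogonal_singleton_iff_inner_left.mp (hspan hs)

lemma closelyConnected_iff_orthogonal_eq_bot :
    CloselyConnected A B C ↔ (ccSpace A B C)ᗮ = ⊥ := by
  rw [CloselyConnected, ccSpace, Submodule.topologicalClosure_eq_top_iff,
    Submodule.orthogonal_closure]

end

section

variable [CompleteSpace U]

variable (A B C) in
structure IsDecoupled (M : Set X) : Prop where
  mapsTo : ∀ k, MapsTo (A k) M M
  adjoint_mapsTo : ∀ k, MapsTo (adjoint (A k)) M M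
  adjoint_input_eq_zero : ∀ k, ∀ x ∈ M, adjoint (B k) x = 0
  output_eq_zero : ∀ k, ∀ x ∈ M, C k x = 0

end

variable [CompleteSpace U] [CompleteSpace Y]

lemma IsDecoupled.subset_orthogonal_ccSpace {M : Set X} (hM : IsDecoupled A B C M) :
    M ⊆ (ccSpace A B C)ᗮ := by
  refine fun x hx => mem_orthogonal_ccSpace_iff.mpr ?_
  rintro _ (⟨w, k, u, rfl⟩ | ⟨w, k, y, rfl⟩)
  · refine inner_wordOp_eq_zero_of_mapsTo hM.mapsTo hM.adjoint_mapsTo (fun x hx => ?_) w x hx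
    rw [← adjoint_inner_right, hM.adjoint_input_eq_zero k x hx, inner_zero_right]
  · refine inner_wordOp_eq_zero_of_mapsTo hM.mapsTo hM.adjoint_mapsTo (fun x hx => ?_) w x hx
    rw [adjoint_inner_left, hM.output_eq_zero k x hx, inner_zero_right]

lemma isDecoupled_orthogonal_ccSpace : IsDecoupled A B C (ccSpace A B C)ᗮ where
  mapsTo k x hx := mem_orthogonal_ccSpace_iff.mpr fun s hs => by
    rw [← adjoint_inner_left]
    exact mem_orthogonal_ccSpace_iff.mp hx _ (adjoint_mapsTo_ccSet k hs)
  adjoint_mapsTo k x hx := mem_orthogonal_ccSpace_iff.mpr fun s hs => by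
    rw [adjoint_inner_right]
    exact mem_orthogonal_ccSpace_iff.mp hx _ (mapsTo_ccSet k hs)
  adjoint_input_eq_zero k x hx := ext_inner_left ℂ fun u => by
    rw [adjoint_inner_right, inner_zero_right]
    exact mem_orthogonal_ccSpace_iff.mp hx _ (input_mem_ccSet k u)
  output_eq_zero k x hx := inner_self_eq_zero.mp <| by
    rw [← adjoint_inner_left]
    exact mem_orthogonal_ccSpace_iff.mp hx _ (adjoint_output_mem_ccSet k _)

theorem closelyConnected_iff_forall_isDecoupled :
    CloselyConnected A B C ↔ ∀ M, IsDecoupled A B C M → ∀ x ∈ M, x = 0 := by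
  rw [closelyConnected_iff_orthogonal_eq_bot]
  refine ⟨fun h M hM x hx => ?_, fun h => (Submodule.eq_bot_iff _).mpr
    (h _ isDecoupled_orthogonal_ccSpace)⟩
  simpa [h] using hM.subset_orthogonal_ccSpace hx

end decoupled

section cascade

variable {N : ℕ} {X1 V X2 U Y : Type*}
  [NormedAddCommGroup X1] [InnerProductSpace ℂ X1]
  [NormedAddCommGroup V] [InnerProductSpace ℂ V]
  [NormedAddCommGroup X2] [InnerProductSpace ℂ X2]
  [NormedAddCommGroup U] [InnerProductSpace ℂ U]
  [NormedAddCommGroup Y] [InnerProductSpace ℂ Y]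
  {A1 : Fin N → (X1 →L[ℂ] X1)} {B1 : Fin N → (U →L[ℂ] X1)}
  {C1 : Fin N → (X1 →L[ℂ] V)} {D1 : Fin N → (U →L[ℂ] V)}
  {A2 : Fin N → (X2 →L[ℂ] X2)} {B2 : Fin N → (V →L[ℂ] X2)}
  {C2 : Fin N → (X2 →L[ℂ] Y)} {D2 : Fin N → (V →L[ℂ] Y)}

def cascInclX1 : X1 →L[ℂ] hS X2 (hS V X1) := (inrL X2 (hS V X1)).comp (inrL V X1)

def cascInclX2 : X2 →L[ℂ] hS X2 (hS V X1) := inlL X2 (hS V X1)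

lemma cascInclX1_injective :
    Function.Injective (cascInclX1 (X1 := X1) (V := V) (X2 := X2)) := by
  intro x x' h
  simpa [cascInclX1, inrL] using congrArg (fun v => v.snd.snd) h

lemma cascInclX2_injective :
    Function.Injective (cascInclX2 (X1 := X1) (V := V) (X2 := X2)) := by
  intro x x' h
  simpa [cascInclX2, inlL] using congrArg (fun v => v.fst) h

lemma inner_cascInclX1_right (v : hS X2 (hS V X1)) (x : X1) :
    ⟪v, cascInclX1 x⟫_ℂ = ⟪v.snd.snd, x⟫_ℂ := by
  simp [cascInclX1, inrL]

lemma inner_cascInclX2_right (v : hS X2 (hS V X1)) (x : X2) :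
    ⟪v, cascInclX2 x⟫_ℂ = ⟪v.fst, x⟫_ℂ := by
  simp [cascInclX2, inlL]

lemma cascA_cascInclX1 (k : Fin N) {x : X1} (hx : C1 k x = 0) :
    cascA A1 C1 A2 B2 k (cascInclX1 x) = cascInclX1 (A1 k x) := by
  simp [cascA, block2, cascInclX1, inlL, inrL, fstL, sndL, hx, ← WithLp.toLp_add]

lemma cascA_cascInclX2 (k : Fin N) (x : X2) :
    cascA A1 C1 A2 B2 k (cascInclX2 x) = cascInclX2 (A2 k x) := by
  simp [cascA, block2, cascInclX2, inlL, inrL, fstL, sndL, ← WithLp.toLp_add]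

lemma cascC_cascInclX1 (k : Fin N) (x : X1) :
    cascC C2 D2 k (cascInclX1 x) = 0 := by
  simp [cascC, cascInclX1, inrL, fstL, sndL]

lemma cascC_cascInclX2 (k : Fin N) (x : X2) :
    cascC (X1 := X1) C2 D2 k (cascInclX2 x) = C2 k x := by
  simp [cascC, cascInclX2, inlL, fstL, sndL]

variable [CompleteSpace X1] [CompleteSpace V] [CompleteSpace X2]

lemma adjoint_cascA_cascInclX1 (k : Fin N) (x : X1) :
    adjoint (cascA A1 C1 A2 B2 k) (cascInclX1 x) = cascInclX1 (adjoint (A1 k) x) := by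
  refine ext_inner_left ℂ fun v => ?_
  rw [adjoint_inner_right, inner_cascInclX1_right, inner_cascInclX1_right, adjoint_inner_right]
  simp [cascA, block2, inlL, inrL, fstL, sndL]

lemma adjoint_cascA_cascInclX2 (k : Fin N) {x : X2} (hx : adjoint (B2 k) x = 0) :
    adjoint (cascA A1 C1 A2 B2 k) (cascInclX2 x) = cascInclX2 (adjoint (A2 k) x) := by
  refine ext_inner_left ℂ fun v => ?_
  rw [adjoint_inner_right, inner_cascInclX2_right, inner_cascInclX2_right, adjoint_inner_right]
  have hB : ⟪B2 k v.snd.fst, x⟫_ℂ = 0 := by rw [← adjoint_inner_right, hx, inner_zero_right]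
  simp [cascA, block2, inlL, inrL, fstL, sndL, hB]

variable [CompleteSpace U]

lemma adjoint_cascB_cascInclX1 (k : Fin N) (x : X1) :
    adjoint (cascB (X2 := X2) B1 D1 k) (cascInclX1 x) = adjoint (B1 k) x := by
  refine ext_inner_left ℂ fun u => ?_
  rw [adjoint_inner_right, inner_cascInclX1_right, adjoint_inner_right]
  simp [cascB, inlL, inrL]

lemma adjoint_cascB_cascInclX2 (k : Fin N) (x : X2) :
    adjoint (cascB (X2 := X2) B1 D1 k) (cascInclX2 x) = 0 := by
  refine ext_inner_left ℂ fun u => ?_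
  rw [adjoint_inner_right, inner_cascInclX2_right, inner_zero_right]
  simp [cascB, inlL, inrL]

lemma IsDecoupled.image_cascInclX1 {M : Set X1} (hM : IsDecoupled A1 B1 C1 M) :
    IsDecoupled (cascA A1 C1 A2 B2) (cascB (X2 := X2) B1 D1) (cascC C2 D2) (cascInclX1 '' M) where
  mapsTo k := by
    rintro _ ⟨x, hx, rfl⟩
    exact ⟨_, hM.mapsTo k hx, (cascA_cascInclX1 k (hM.output_eq_zero k x hx)).symm⟩
  adjoint_mapsTo k := by
    rintro _ ⟨x, hx, rfl⟩
    exact ⟨_, hM.adjoint_mapsTo k hx, (adjoint_cascA_cascInclX1 k x).symm⟩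
  adjoint_input_eq_zero k := by
    rintro _ ⟨x, hx, rfl⟩
    rw [adjoint_cascB_cascInclX1]
    exact hM.adjoint_input_eq_zero k x hx
  output_eq_zero k := by
    rintro _ ⟨x, -, rfl⟩
    exact cascC_cascInclX1 k x

lemma IsDecoupled.image_cascInclX2 {M : Set X2} (hM : IsDecoupled A2 B2 C2 M) :
    IsDecoupled (cascA A1 C1 A2 B2) (cascB (X2 := X2) B1 D1) (cascC C2 D2) (cascInclX2 '' M) where
  mapsTo k := by
    rintro _ ⟨x, hx, rfl⟩
    exact ⟨_, hM.mapsTo k hx, (cascA_cascInclX2 k x).symm⟩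
  adjoint_mapsTo k := by
    rintro _ ⟨x, hx, rfl⟩
    exact ⟨_, hM.adjoint_mapsTo k hx,
      (adjoint_cascA_cascInclX2 k (hM.adjoint_input_eq_zero k x hx)).symm⟩
  adjoint_input_eq_zero k := by
    rintro _ ⟨x, -, rfl⟩
    exact adjoint_cascB_cascInclX2 k x
  output_eq_zero k := by
    rintro _ ⟨x, hx, rfl⟩
    rw [cascC_cascInclX2]
    exact hM.output_eq_zero k x hx

end cascade

theorem cascade_closely_connected_implies_factors_general {N : ℕ} {X1 V X2 U Y : Type}
    [NormedAddCommGroup X1] [InnerProductSpace ℂ X1] [CompleteSpace X1]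
    [NormedAddCommGroup V] [InnerProductSpace ℂ V] [CompleteSpace V]
    [NormedAddCommGroup X2] [InnerProductSpace ℂ X2] [CompleteSpace X2]
    [NormedAddCommGroup U] [InnerProductSpace ℂ U] [CompleteSpace U]
    [NormedAddCommGroup Y] [InnerProductSpace ℂ Y] [CompleteSpace Y]
    (A1 : Fin N → (X1 →L[ℂ] X1)) (B1 : Fin N → (U →L[ℂ] X1))
    (C1 : Fin N → (X1 →L[ℂ] V)) (D1 : Fin N → (U →L[ℂ] V))
    (A2 : Fin N → (X2 →L[ℂ] X2)) (B2 : Fin N → (V →L[ℂ] X2))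
    (C2 : Fin N → (X2 →L[ℂ] Y)) (D2 : Fin N → (V →L[ℂ] Y))
    (hcc : CloselyConnected (cascA A1 C1 A2 B2) (cascB (X2 := X2) B1 D1) (cascC C2 D2)) :
    CloselyConnected A1 B1 C1 ∧ CloselyConnected A2 B2 C2 := by
  rw [closelyConnected_iff_forall_isDecoupled] at hcc
  simp only [closelyConnected_iff_forall_isDecoupled]
  constructor
  · intro M hM x hx
    exact (map_eq_zero_iff _ cascInclX1_injective).mp
      (hcc _ hM.image_cascInclX1 _ (mem_image_of_mem _ hx))
  · intro M hM x hx
    exact (map_eq_zero_iff _ cascInclX2_injective).mp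
      (hcc _ hM.image_cascInclX2 _ (mem_image_of_mem _ hx))

/-- Theorem `thm:clos-con`: if a cascade connection `α = α⁽²⁾α⁽¹⁾` is closely
connected, then both factors `α⁽¹⁾` and `α⁽²⁾` are closely connected. -/
theorem cascade_closely_connected_implies_factors {N : ℕ} {X1 V X2 U Y : Type}
    [NormedAddCommGroup X1] [InnerProductSpace ℂ X1] [CompleteSpace X1]
    [TopologicalSpace.SeparableSpace X1]
    [NormedAddCommGroup V] [InnerProductSpace ℂ V] [CompleteSpace V]
    [TopologicalSpace.SeparableSpace V]
    [NormedAddCommGroup X2] [InnerProductSpace ℂ X2] [CompleteSpace X2]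
    [TopologicalSpace.SeparableSpace X2]
    [NormedAddCommGroup U] [InnerProductSpace ℂ U] [CompleteSpace U]
    [TopologicalSpace.SeparableSpace U]
    [NormedAddCommGroup Y] [InnerProductSpace ℂ Y] [CompleteSpace Y]
    [TopologicalSpace.SeparableSpace Y]
    (A1 : Fin N → (X1 →L[ℂ] X1)) (B1 : Fin N → (U →L[ℂ] X1))
    (C1 : Fin N → (X1 →L[ℂ] V)) (D1 : Fin N → (U →L[ℂ] V))
    (A2 : Fin N → (X2 →L[ℂ] X2)) (B2 : Fin N → (V →L[ℂ] X2))
    (C2 : Fin N → (X2 →L[ℂ] Y)) (D2 : Fin N → (V →L[ℂ] Y))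
    (hcc : CloselyConnected (cascA A1 C1 A2 B2) (cascB (X2 := X2) B1 D1) (cascC C2 D2)) :
    CloselyConnected A1 B1 C1 ∧ CloselyConnected A2 B2 C2 :=
  cascade_closely_connected_implies_factors_general A1 B1 C1 D1 A2 B2 C2 D2 hcc
end cc
end
end

section
/- Let U be the bilateral shift on ℓ²(ℤ), decomposed over ℓ²(ℤ) = ℓ²₊ ⊕ ℓ²₋ where ℓ²₊ = ℓ²(ℤ≥0) and ℓ²₋ = ℓ²(ℤ<0), giving block decompositions U* = [[A⁽¹⁾, B⁽¹⁾],[C⁽¹⁾, D⁽¹⁾]] and U = [[A⁽²⁾, B⁽²⁾],[C⁽²⁾, D⁽²⁾]] relative to ℓ²₊ ⊕ ℓ²₋ → ℓ²₊ ⊕ ℓ²₋. Then the cascade operator A = [[A⁽²⁾, B⁽²⁾, 0],[0, 0, C⁽¹⁾],[0, 0, A⁽¹⁾]] on ℓ²₊ ⊕ ℓ²₋ ⊕ ℓ²₊ has a nontrivial closed invariant subspace X_K = ℓ²₊ ⊕ K ⊕ ℓ²₊ (where K := span of the indicator sequence at index −1 inside ℓ²₋) on which A restricts to a unitary operator. 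-/
/-!
On `X_K = ℓ²₊ ⊕ K ⊕ ℓ²₊`, writing `k` for the value at index `−1` of the middle component, the
cascade acts as `(x, k, y) ↦ (k :: x, y₀, tail y)`: it is the bilateral shift in disguise. Hence
it preserves the sum of the squared norms of all coordinates, and it is onto `X_K` with inverse
`(x, k, y) ↦ (tail x, x₀, k :: y)`.
-/

noncomputable section

open scoped ComplexConjugate

variable {N : ℕ}

/-- `ℓ²₊ = ℓ²(ℤ_{≥0})` -/
abbrev l2P := lp (fun _ : ℕ => ℂ) 2

/-- `ℓ²₋ = ℓ²(ℤ_{<0})`, with coordinate `n` standing for the index `−1−n` -/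
abbrev l2M := lp (fun _ : ℕ => ℂ) 2

/-- the one-dimensional subspace `K ⊆ ℓ²₋` of sequences supported at the index `−1` -/
def Ksub : Submodule ℂ l2M where
  carrier := {c | ∀ n : ℕ, n ≠ 0 → (c : ∀ _ : ℕ, ℂ) n = 0}
  add_mem' := by
    intro a b ha hb n hn
    have : (↑(a + b) : ∀ _ : ℕ, ℂ) n = a n + b n := by simp [lp.coeFn_add]
    rw [this, ha n hn, hb n hn, add_zero]
  zero_mem' := by intro n hn; simp
  smul_mem' := by
    intro r c hc n hn
    have : (↑(r • c) : ∀ _ : ℕ, ℂ) n = r * c n := by simp [lp.coeFn_smul]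
    rw [this, hc n hn, mul_zero]

section ell2

variable {E : Type*} [NormedAddCommGroup E]

lemma lp.norm_sq_eq_norm_sq_zero_add {g f : lp (fun _ : ℕ => E) 2}
    (h : ∀ n, (g : ∀ _ : ℕ, E) (n + 1) = f n) : ‖g‖ ^ 2 = ‖g 0‖ ^ 2 + ‖f‖ ^ 2 := by
  have hsum (f : lp (fun _ : ℕ => E) 2) :
      HasSum (fun n => ‖(f : ∀ _ : ℕ, E) n‖ ^ 2) (‖f‖ ^ 2) := by
    simpa using lp.hasSum_norm (p := 2) (by norm_num) f
  rw [← (hsum g).tsum_eq, (hsum g).summable.tsum_eq_zero_add, ← (hsum f).tsum_eq]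
  simp only [h]

lemma lp.norm_eq_norm_zero_of_succ_eq_zero {g : lp (fun _ : ℕ => E) 2}
    (h : ∀ n, (g : ∀ _ : ℕ, E) (n + 1) = 0) : ‖g‖ = ‖g 0‖ := by
  have := lp.norm_sq_eq_norm_sq_zero_add (f := 0) (by simpa using h)
  rwa [norm_zero, zero_pow two_ne_zero, add_zero, sq_eq_sq₀ (norm_nonneg _) (norm_nonneg _)]
    at this

lemma lp.ext_zero_succ {f g : lp (fun _ : ℕ => E) 2} (h0 : (f : ∀ _ : ℕ, E) 0 = g 0)
    (h : ∀ n, (f : ∀ _ : ℕ, E) (n + 1) = g (n + 1)) : f = g :=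
  lp.ext <| funext fun n => by cases n <;> simp only [h0, h]

end ell2

lemma mem_Ksub_iff_succ {c : l2M} : c ∈ Ksub ↔ ∀ n, (c : ∀ _ : ℕ, ℂ) (n + 1) = 0 :=
  ⟨fun hc n => hc (n + 1) n.succ_ne_zero,
    fun hc n hn => by obtain ⟨m, rfl⟩ := Nat.exists_eq_succ_of_ne_zero hn; exact hc m⟩

lemma isClosed_Ksub : IsClosed (Ksub : Set l2M) := by
  have : (Ksub : Set l2M) = ⋂ n ≠ 0, {c : l2M | (c : ∀ _ : ℕ, ℂ) n = 0} := by
    ext c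
    simp only [SetLike.mem_coe, Set.mem_iInter, Set.mem_ofPred_eq]
    rfl
  rw [this]
  exact isClosed_biInter fun n _ =>
    isClosed_eq ((continuous_apply n).comp lp.uniformContinuous_coe.continuous) continuous_const

lemma hS_ext {X U : Type*} {x y : hS X U} (h1 : x.fst = y.fst) (h2 : x.snd = y.snd) : x = y :=
  (WithLp.ext_iff 2).2 (Prod.ext h1 h2)

section cascade

variable {X U X' Y' : Type*} [NormedAddCommGroup X] [NormedAddCommGroup U]
  [NormedAddCommGroup X'] [NormedAddCommGroup Y']
  [NormedSpace ℂ X] [NormedSpace ℂ U] [NormedSpace ℂ X'] [NormedSpace ℂ Y']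

@[simp] lemma fstL_apply_s9 (w : hS X U) : fstL X U w = w.fst := rfl

@[simp] lemma sndL_apply_s9 (w : hS X U) : sndL X U w = w.snd := rfl

lemma block2_apply_s9 (A : X →L[ℂ] X') (B : U →L[ℂ] X') (C : X →L[ℂ] Y') (D : U →L[ℂ] Y')
    (w : hS X U) :
    block2 A B C D w = WithLp.toLp 2 (A w.fst + B w.snd, C w.fst + D w.snd) := by
  apply hS_ext <;> simp [block2, inlL, inrL]

/-- The cascade operator `[[A₂, B₂, 0], [0, 0, C₁], [0, 0, A₁]]` on `X ⊕ U ⊕ X'`. -/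
def cascade (A2 : X →L[ℂ] X) (B2 : U →L[ℂ] X) (C1 : X' →L[ℂ] U) (A1 : X' →L[ℂ] X') :
    hS X (hS U X') →L[ℂ] hS X (hS U X') :=
  block2 A2 (B2.comp (fstL U X')) 0 (block2 0 C1 0 A1)

@[simp] lemma cascade_apply (A2 : X →L[ℂ] X) (B2 : U →L[ℂ] X) (C1 : X' →L[ℂ] U)
    (A1 : X' →L[ℂ] X') (w : hS X (hS U X')) :
    cascade A2 B2 C1 A1 w =
      WithLp.toLp 2 (A2 w.fst + B2 w.snd.fst, WithLp.toLp 2 (C1 w.snd.snd, A1 w.snd.snd)) := by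
  simp [cascade, block2_apply_s9]

end cascade

section shiftCascade

def IsBackwardShift (T : lp (fun _ : ℕ => ℂ) 2 →L[ℂ] lp (fun _ : ℕ => ℂ) 2) : Prop :=
  ∀ c n, (T c : ∀ _ : ℕ, ℂ) n = c (n + 1)

def IsForwardShift (T : lp (fun _ : ℕ => ℂ) 2 →L[ℂ] lp (fun _ : ℕ => ℂ) 2) : Prop :=
  ∀ c, (T c : ∀ _ : ℕ, ℂ) 0 = 0 ∧ ∀ n, (T c : ∀ _ : ℕ, ℂ) (n + 1) = c n

def IsHeadProjection (T : lp (fun _ : ℕ => ℂ) 2 →L[ℂ] lp (fun _ : ℕ => ℂ) 2) : Prop :=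
  ∀ c, (T c : ∀ _ : ℕ, ℂ) 0 = c 0 ∧ ∀ n, (T c : ∀ _ : ℕ, ℂ) (n + 1) = 0

variable {A1 A2 : l2P →L[ℂ] l2P} {C1 : l2P →L[ℂ] l2M} {B2 : l2M →L[ℂ] l2P}

lemma cascade_shift_mem_Ksub (hC1 : IsHeadProjection C1) (w : hS l2P (hS l2M l2P)) :
    (cascade A2 B2 C1 A1 w).snd.fst ∈ Ksub := by
  simpa [mem_Ksub_iff_succ] using (hC1 w.snd.snd).2

lemma norm_cascade_shift (hA1 : IsBackwardShift A1) (hA2 : IsForwardShift A2)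
    (hC1 : IsHeadProjection C1) (hB2 : IsHeadProjection B2) {w : hS l2P (hS l2M l2P)}
    (hw : w.snd.fst ∈ Ksub) :
    ‖cascade A2 B2 C1 A1 w‖ = ‖w‖ := by
  have hx : ‖A2 w.fst + B2 w.snd.fst‖ ^ 2 = ‖w.snd.fst 0‖ ^ 2 + ‖w.fst‖ ^ 2 := by
    rw [lp.norm_sq_eq_norm_sq_zero_add (f := w.fst) fun n => by simp [(hA2 _).2, (hB2 _).2]]
    simp [(hA2 _).1, (hB2 _).1]
  have hu : ‖w.snd.fst‖ = ‖w.snd.fst 0‖ :=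
    lp.norm_eq_norm_zero_of_succ_eq_zero (mem_Ksub_iff_succ.1 hw)
  have hCy : ‖C1 w.snd.snd‖ = ‖w.snd.snd 0‖ := by
    rw [lp.norm_eq_norm_zero_of_succ_eq_zero (hC1 _).2, (hC1 _).1]
  have hy : ‖w.snd.snd‖ ^ 2 = ‖w.snd.snd 0‖ ^ 2 + ‖A1 w.snd.snd‖ ^ 2 :=
    lp.norm_sq_eq_norm_sq_zero_add fun n => (hA1 _ n).symm
  rw [← sq_eq_sq₀ (norm_nonneg _) (norm_nonneg _), WithLp.prod_norm_sq_eq_of_L2,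
    WithLp.prod_norm_sq_eq_of_L2, WithLp.prod_norm_sq_eq_of_L2 w,
    WithLp.prod_norm_sq_eq_of_L2 w.snd]
  simp only [cascade_apply, WithLp.toLp_fst, WithLp.toLp_snd]
  rw [hx, hu, hCy, hy]
  ring

lemma exists_cascade_shift_eq (hA1 : IsBackwardShift A1) (hA2 : IsForwardShift A2)
    (hC1 : IsHeadProjection C1) (hB2 : IsHeadProjection B2) {w : hS l2P (hS l2M l2P)}
    (hw : w.snd.fst ∈ Ksub) :
    ∃ v : hS l2P (hS l2M l2P), v.snd.fst ∈ Ksub ∧ cascade A2 B2 C1 A1 v = w := by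
  refine ⟨WithLp.toLp 2 (A1 w.fst, WithLp.toLp 2 (lp.single 2 0 (w.fst 0),
    lp.single 2 0 (w.snd.fst 0) + A2 w.snd.snd)), ?_, ?_⟩
  · exact mem_Ksub_iff_succ.2 fun n => lp.single_apply_ne 2 0 _ n.succ_ne_zero
  · rw [mem_Ksub_iff_succ] at hw
    refine hS_ext ?_ (hS_ext ?_ ?_) <;>
      simp only [cascade_apply, WithLp.toLp_fst, WithLp.toLp_snd]
    · refine lp.ext_zero_succ ?_ fun n => ?_ <;>
        simp [(hA2 _).1, (hA2 _).2, (hB2 _).1, (hB2 _).2, hA1 _ _]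
    · refine lp.ext_zero_succ ?_ fun n => ?_ <;>
        simp [(hA2 _).1, (hC1 _).1, (hC1 _).2, hw]
    · exact lp.ext <| funext fun n => by simp [hA1 _ _, (hA2 _).2, lp.single_apply]

end shiftCascade

/-- the example of Section `sec:cascade`: the cascade operator
`A = [[A⁽²⁾, B⁽²⁾, 0],[0,0,C⁽¹⁾],[0,0,A⁽¹⁾]]` built from the block decompositions of the
bilateral shift (`A⁽¹⁾` backward shift, `A⁽²⁾` forward shift, `C⁽¹⁾ c = (…,0,0,c₀)`,
`B⁽²⁾ c = col(c₋₁,0,0,…)`) has a nontrivial closed invariant subspace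
`X_K = ℓ²₊ ⊕ K ⊕ ℓ²₊` on which it restricts to a unitary operator. -/
theorem cascade_shift_example_has_unitary_part
    (A1 : l2P →L[ℂ] l2P) (hA1 : ∀ (c : l2P) (n : ℕ), (A1 c : ∀ _ : ℕ, ℂ) n = c (n + 1))
    (A2 : l2P →L[ℂ] l2P)
    (hA2 : ∀ c : l2P, (A2 c : ∀ _ : ℕ, ℂ) 0 = 0 ∧ ∀ n, (A2 c : ∀ _ : ℕ, ℂ) (n + 1) = c n)
    (C1 : l2P →L[ℂ] l2M)
    (hC1 : ∀ c : l2P, (C1 c : ∀ _ : ℕ, ℂ) 0 = c 0 ∧ ∀ n, (C1 c : ∀ _ : ℕ, ℂ) (n + 1) = 0)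
    (B2 : l2M →L[ℂ] l2P)
    (hB2 : ∀ c : l2M, (B2 c : ∀ _ : ℕ, ℂ) 0 = c 0 ∧ ∀ n, (B2 c : ∀ _ : ℕ, ℂ) (n + 1) = 0) :
    let Acasc : hS l2P (hS l2M l2P) →L[ℂ] hS l2P (hS l2M l2P) :=
      block2 A2 (B2.comp (fstL l2M l2P)) 0 (block2 0 C1 0 A1)
    let XK : Submodule ℂ (hS l2P (hS l2M l2P)) :=
      Ksub.comap ((fstL l2M l2P).comp (sndL l2P (hS l2M l2P))).toLinearMap
    IsClosed (XK : Set (hS l2P (hS l2M l2P))) ∧ XK ≠ ⊥ ∧ XK ≠ ⊤ ∧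
      (∀ w ∈ XK, Acasc w ∈ XK) ∧ (∀ w ∈ XK, ‖Acasc w‖ = ‖w‖) ∧
      (∀ w ∈ XK, ∃ v ∈ XK, Acasc v = w) := by
  intro Acasc XK
  have mem_XK (w : hS l2P (hS l2M l2P)) : w ∈ XK ↔ w.snd.fst ∈ Ksub := Iff.rfl
  refine ⟨isClosed_Ksub.preimage (ContinuousLinearMap.continuous _), ?_, ?_,
    fun w _ => cascade_shift_mem_Ksub hC1 w,
    fun w hw => norm_cascade_shift hA1 hA2 hC1 hB2 hw,
    fun w hw => exists_cascade_shift_eq hA1 hA2 hC1 hB2 hw⟩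
  · refine (Submodule.ne_bot_iff XK).2 ⟨WithLp.toLp 2 (lp.single 2 0 1, 0), Ksub.zero_mem, ?_⟩
    intro h
    simpa using congrArg (fun w : hS l2P (hS l2M l2P) => (w.fst : ∀ _ : ℕ, ℂ) 0) h
  · intro h
    have := (mem_XK (WithLp.toLp 2 (0, WithLp.toLp 2 (lp.single 2 1 1, 0)))).1 (h ▸ trivial)
    simpa using mem_Ksub_iff_succ.1 this 0
end
end
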